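/- arXiv:cs/0101019 — 8 statements merged into one kernel-verified Lean document; each statement's English description precedes it below -/
import Mathlib

section
/- For every n ≥ 1, the total relative entropy satisfies H_n ≤ ln(1/w_μ), where w_μ is the weight of the true distribution μ in the mixture ξ. -/
/-!
By the chain rule for relative entropy, `H_n` equals the relative entropy of `μ` to `ξ` on
strings of length `n`, `∑_x μ(x) ln (μ(x)/ξ(x))`. Dominance `ξ ≥ w_μ μ` bounds every logarithm
by `ln (1/w_μ)`, and the weights `μ(x)` sum to `1`.
-/

open Finset Filter

/-- A probability distribution on finite binary strings:
nonnegative, `1` on the empty string, and additive under one-symbol extension. -/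
def IsDistr (ρ : List Bool → ℝ) : Prop :=
  (∀ x, 0 ≤ ρ x) ∧ ρ [] = 1 ∧
    ∀ x, ρ x = ρ (x ++ [false]) + ρ (x ++ [true])

/-- Conditional probability `ρ(b | x) = ρ(xb)/ρ(x)` (junk `0` when `ρ x = 0`). -/
noncomputable def condP (ρ : List Bool → ℝ) (x : List Bool) (b : Bool) : ℝ :=
  ρ (x ++ [b]) / ρ x

/-- Instantaneous relative entropy
`h_t(x) = ∑_b μ(b|x) ln (μ(b|x)/ξ(b|x))` (conventions `0·ln 0 = 0` are automatic
since `Real.log 0 = 0` and `r/0 = 0`). -/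
noncomputable def instEnt (μ ξ : List Bool → ℝ) (x : List Bool) : ℝ :=
  ∑ b : Bool, condP μ x b * Real.log (condP μ x b / condP ξ x b)

/-- Total relative entropy `H_n = ∑_{t=1}^n ∑_{x_{<t}} μ(x_{<t}) h_t(x_{<t})`
(histories of length `t-1`, i.e. length `t ∈ {0,…,n-1}`). -/
noncomputable def totalEnt (μ ξ : List Bool → ℝ) (n : ℕ) : ℝ :=
  ∑ t ∈ Finset.range n, ∑ x : Fin t → Bool,
    μ (List.ofFn x) * instEnt μ ξ (List.ofFn x)

/-- `ρ`-expected loss of predicting `y` after history `x`. -/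
noncomputable def expLoss (ρ : List Bool → ℝ) (l : Bool → Bool → ℝ)
    (x : List Bool) (y : Bool) : ℝ :=
  ∑ b : Bool, condP ρ x b * l b y

/-- `Y` is a fixed choice of minimizers for the scheme `Λ_ρ`. -/
def IsPredictor (ρ : List Bool → ℝ) (l : Bool → Bool → ℝ)
    (Y : List Bool → Bool) : Prop :=
  ∀ x y, expLoss ρ l x (Y x) ≤ expLoss ρ l x y

/-- Total `μ`-expected loss `L_{nΛ}` of the scheme with minimizers `Y`. -/
noncomputable def totalLoss (μ : List Bool → ℝ) (l : Bool → Bool → ℝ)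
    (Y : List Bool → Bool) (n : ℕ) : ℝ :=
  ∑ t ∈ Finset.range n, ∑ x : Fin t → Bool,
    μ (List.ofFn x) * expLoss μ l (List.ofFn x) (Y (List.ofFn x))

lemma Fintype.sum_fin_succ_pi_snoc {α M : Type*} [Fintype α] [AddCommMonoid M] {n : ℕ}
    (g : (Fin (n + 1) → α) → M) :
    ∑ x : Fin (n + 1) → α, g x = ∑ y : Fin n → α, ∑ a : α, g (Fin.snoc y a) := by
  rw [← (Fin.snocEquiv fun _ => α).sum_comp g, Fintype.sum_prod_type, Finset.sum_comm]
  rfl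

lemma List.ofFn_fin_snoc {α : Type*} {n : ℕ} (y : Fin n → α) (a : α) :
    List.ofFn (Fin.snoc y a : Fin (n + 1) → α) = List.ofFn y ++ [a] := by
  rw [List.ofFn_succ']
  simp [List.concat_eq_append]

/-- With `A = μ x`, `C = ξ x`, `a = μ (x ++ [b])`, `c = ξ (x ++ [b])` this is one step of the
chain rule for relative entropy. -/
lemma Real.mul_log_div_eq_of_pos {a c A C : ℝ} (ha : 0 ≤ a) (hc : 0 < a → 0 < c)
    (hA : 0 < A) (hC : 0 < C) :
    a * Real.log (a / c) = a * Real.log (A / C) + A * (a / A * Real.log (a / A / (c / C))) := by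
  rcases ha.eq_or_lt with rfl | ha
  · simp
  have hc := hc ha
  have hsplit : a / c = A / C * (a / A / (c / C)) := by field_simp
  rw [hsplit, Real.log_mul (by positivity) (by positivity)]
  field_simp

namespace IsDistr

variable {μ : List Bool → ℝ}

lemma sum_append (hμ : IsDistr μ) (x : List Bool) : ∑ b : Bool, μ (x ++ [b]) = μ x := by
  rw [Fintype.sum_bool, hμ.2.2 x, add_comm]

lemma append_eq_zero (hμ : IsDistr μ) {x : List Bool} (hx : μ x = 0) (b : Bool) :
    μ (x ++ [b]) = 0 := by
  have := hμ.2.2 x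
  have := hμ.1 (x ++ [false])
  have := hμ.1 (x ++ [true])
  cases b <;> linarith

lemma sum_ofFn_eq_one (hμ : IsDistr μ) (n : ℕ) : ∑ x : Fin n → Bool, μ (List.ofFn x) = 1 := by
  induction n with
  | zero => simp [hμ.2.1]
  | succ n ih =>
    simp only [Fintype.sum_fin_succ_pi_snoc, List.ofFn_fin_snoc, hμ.sum_append, ih]

end IsDistr

noncomputable def relEnt (μ ξ : List Bool → ℝ) (n : ℕ) : ℝ :=
  ∑ x : Fin n → Bool, μ (List.ofFn x) * Real.log (μ (List.ofFn x) / ξ (List.ofFn x))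

section RelEnt

variable {μ ξ : List Bool → ℝ}

lemma sum_append_mul_log_div (hμ : IsDistr μ) (hac : ∀ x, 0 < μ x → 0 < ξ x) (x : List Bool) :
    ∑ b : Bool, μ (x ++ [b]) * Real.log (μ (x ++ [b]) / ξ (x ++ [b])) =
      μ x * Real.log (μ x / ξ x) + μ x * instEnt μ ξ x := by
  rcases (hμ.1 x).eq_or_lt with hx | hx
  · simp [← hx, hμ.append_eq_zero hx.symm]
  have hstep (b : Bool) := Real.mul_log_div_eq_of_pos (hμ.1 (x ++ [b])) (hac _) hx (hac x hx)
  simp only [hstep, Finset.sum_add_distrib, ← Finset.sum_mul, ← Finset.mul_sum, hμ.sum_append]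
  rfl

lemma totalEnt_eq_relEnt (hμ : IsDistr μ) (hac : ∀ x, 0 < μ x → 0 < ξ x) (hξ : ξ [] = 1)
    (n : ℕ) : totalEnt μ ξ n = relEnt μ ξ n := by
  induction n with
  | zero => simp [totalEnt, relEnt, hμ.2.1, hξ]
  | succ n ih =>
    rw [totalEnt, Finset.sum_range_succ, ← totalEnt, ih, relEnt, relEnt,
      Fintype.sum_fin_succ_pi_snoc, ← Finset.sum_add_distrib]
    simp only [List.ofFn_fin_snoc, sum_append_mul_log_div hμ hac]

lemma relEnt_le_log_inv (hμ : IsDistr μ) {c : ℝ} (hc : 0 < c) (hdom : ∀ x, c * μ x ≤ ξ x)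
    (n : ℕ) : relEnt μ ξ n ≤ Real.log (1 / c) := by
  calc relEnt μ ξ n ≤ ∑ x : Fin n → Bool, μ (List.ofFn x) * Real.log (1 / c) := by
        refine Finset.sum_le_sum fun x _ => ?_
        rcases (hμ.1 (List.ofFn x)).eq_or_lt with hx | hx
        · simp [← hx]
        have hξx : 0 < ξ (List.ofFn x) := (mul_pos hc hx).trans_le (hdom _)
        refine mul_le_mul_of_nonneg_left (Real.log_le_log (by positivity) ?_) hx.le
        rw [div_le_div_iff₀ hξx hc]
        linarith [hdom (List.ofFn x)]
    _ = Real.log (1 / c) := by rw [← Finset.sum_mul, hμ.sum_ofFn_eq_one, one_mul]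

end RelEnt

theorem entropy_bound_general {ι : Type*}
    (μs : ι → List Bool → ℝ) (w : ι → ℝ)
    (hμs : ∀ i, IsDistr (μs i)) (hw : ∀ i, 0 < w i) (hw1 : HasSum w 1)
    (ξ : List Bool → ℝ) (hξ : ∀ x, HasSum (fun i => w i * μs i x) (ξ x))
    (i₀ : ι) (n : ℕ) :
    totalEnt (μs i₀) ξ n ≤ Real.log (1 / w i₀) := by
  have hdom (x : List Bool) : w i₀ * μs i₀ x ≤ ξ x :=
    le_hasSum (hξ x) i₀ fun j _ => mul_nonneg (hw j).le ((hμs j).1 x)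
  have hac (x : List Bool) (hx : 0 < μs i₀ x) : 0 < ξ x :=
    (mul_pos (hw i₀) hx).trans_le (hdom x)
  have hξ_nil : ξ [] = 1 := by
    have h := hξ []
    simp only [fun i => (hμs i).2.1, mul_one] at h
    exact h.unique hw1
  rw [totalEnt_eq_relEnt (hμs i₀) hac hξ_nil]
  exact relEnt_le_log_inv (hμs i₀) (hw i₀) hdom n

/-- entropy bound, eq. (5): for every `n ≥ 1`,
`H_n ≤ ln (1/w_μ)` where `w_μ` is the weight of the true distribution `μ = μs i₀`
in the universal mixture `ξ = ∑ i, w i • μs i`. -/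
theorem entropy_bound {ι : Type*} [Countable ι]
    (μs : ι → List Bool → ℝ) (w : ι → ℝ)
    (hμs : ∀ i, IsDistr (μs i)) (hw : ∀ i, 0 < w i) (hw1 : HasSum w 1)
    (ξ : List Bool → ℝ) (hξ : ∀ x, HasSum (fun i => w i * μs i x) (ξ x))
    (i₀ : ι) (n : ℕ) (hn : 1 ≤ n) :
    totalEnt (μs i₀) ξ n ≤ Real.log (1 / w i₀) :=
  entropy_bound_general μs w hμs hw hw1 ξ hξ i₀ n
end

section
/- For every n ≥ 1, ∑_{t=1}^n ∑_{x_{1:t} ∈ {0,1}^t} μ(x_{<t}) (μ(x_t|x_{<t}) − ξ(x_t|x_{<t}))² ≤ H_n ≤ ln(1/w_μ), where terms with μ(x_{<t}) = 0 are taken to be 0. -/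
open Finset Filter

/-! ### Auxiliary lemmas -/

lemma contOn_cmul_log (c : ℝ) (s : Set ℝ) (h : c = 0 ∨ ∀ y ∈ s, y ≠ 0) :
    ContinuousOn (fun y => c * Real.log y) s := by
  rcases h with rfl | h
  · simp only [zero_mul]; exact continuousOn_const
  · exact continuousOn_const.mul (Real.continuousOn_log.mono fun y hy => h y hy)

lemma contOn_cmul_log1m (c : ℝ) (s : Set ℝ) (h : c = 0 ∨ ∀ y ∈ s, (1:ℝ) - y ≠ 0) :
    ContinuousOn (fun y => c * Real.log (1 - y)) s := by
  rcases h with rfl | h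
  · simp only [zero_mul]; exact continuousOn_const
  · exact continuousOn_const.mul (Real.continuousOn_log.comp
      ((continuous_const.sub continuous_id).continuousOn) (fun y hy => by simpa using h y hy))

lemma klBin (p q : ℝ) (hp0 : 0 ≤ p) (hp1 : p ≤ 1) (hq0 : 0 < q) (hq1 : q < 1) :
    2*(p-q)^2 ≤ (p * Real.log p + (1-p) * Real.log (1-p))
       - p * Real.log q - (1-p) * Real.log (1-q) := by
  set F : ℝ → ℝ := fun y => (p * Real.log p + (1-p) * Real.log (1-p))
      - p * Real.log y - (1-p) * Real.log (1-y) - 2*(p-y)^2 with hF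
  have hFp : F p = 0 := by simp only [hF]; ring
  have hderiv : ∀ y ∈ Set.Ioo (0:ℝ) 1, HasDerivAt F ((y - p) * (2*y-1)^2 / (y*(1-y))) y := by
    intro y hy
    have hy0 : y ≠ 0 := ne_of_gt hy.1
    have hy1 : (1:ℝ) - y ≠ 0 := by have := hy.2; intro h; linarith
    have h1 : HasDerivAt (fun z : ℝ => Real.log z) y⁻¹ y := Real.hasDerivAt_log hy0
    have h2' : HasDerivAt (fun z : ℝ => 1 - z) (-1) y := by
      simpa using (hasDerivAt_id y).const_sub 1
    have h2 : HasDerivAt (fun z : ℝ => Real.log (1 - z)) ((1-y)⁻¹ * (-1)) y :=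
      (Real.hasDerivAt_log hy1).comp y h2'
    have h3' : HasDerivAt (fun z : ℝ => p - z) (-1) y := by
      simpa using (hasDerivAt_id y).const_sub p
    have h3 : HasDerivAt (fun z : ℝ => 2*(p-z)^2) (2 * (2 * (p-y) * (-1))) y := by
      simpa [mul_comm] using (h3'.pow 2).const_mul 2
    have hFd : HasDerivAt F
        (0 - p * y⁻¹ - (1-p) * ((1-y)⁻¹ * (-1)) - 2 * (2 * (p-y) * (-1))) y :=
      (((hasDerivAt_const y _).sub (h1.const_mul p)).sub (h2.const_mul (1-p))).sub h3
    convert hFd using 1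
    field_simp
    ring
  rcases le_total p q with hpq | hpq
  · have hsub : Set.Ioo p q ⊆ Set.Ioo (0:ℝ) 1 := fun y hy =>
      ⟨lt_of_le_of_lt hp0 hy.1, lt_trans hy.2 hq1⟩
    have hcont : ContinuousOn F (Set.Icc p q) := by
      apply (((continuousOn_const.sub (contOn_cmul_log p _ ?_)).sub
        (contOn_cmul_log1m (1-p) _ ?_)).sub (by fun_prop))
      · rcases eq_or_lt_of_le hp0 with h | h
        · exact Or.inl h.symm
        · exact Or.inr fun y hy => ne_of_gt (lt_of_lt_of_le h hy.1)
      · exact Or.inr fun y hy => by have := hy.2; intro hc; nlinarith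
    have hmono : MonotoneOn F (Set.Icc p q) := by
      apply monotoneOn_of_deriv_nonneg (convex_Icc p q) hcont
      · intro y hy
        rw [interior_Icc] at hy
        exact ((hderiv y (hsub hy)).differentiableAt).differentiableWithinAt
      · intro y hy
        rw [interior_Icc] at hy
        rw [(hderiv y (hsub hy)).deriv]
        apply div_nonneg
        · exact mul_nonneg (by linarith [hy.1]) (sq_nonneg _)
        · have h1 := (hsub hy).1; have h2 := (hsub hy).2
          nlinarith
    have := hmono (Set.left_mem_Icc.2 hpq) (Set.right_mem_Icc.2 hpq) hpq
    rw [hFp] at this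
    simp only [hF] at this
    linarith
  · have hsub : Set.Ioo q p ⊆ Set.Ioo (0:ℝ) 1 := fun y hy =>
      ⟨lt_trans hq0 hy.1, lt_of_lt_of_le hy.2 hp1⟩
    have hcont : ContinuousOn F (Set.Icc q p) := by
      apply (((continuousOn_const.sub (contOn_cmul_log p _ ?_)).sub
        (contOn_cmul_log1m (1-p) _ ?_)).sub (by fun_prop))
      · exact Or.inr fun y hy => ne_of_gt (lt_of_lt_of_le hq0 hy.1)
      · rcases eq_or_lt_of_le hp1 with h | h
        · exact Or.inl (by rw [h]; ring)
        · exact Or.inr fun y hy => by have := hy.2; intro hc; nlinarith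
    have hmono : AntitoneOn F (Set.Icc q p) := by
      apply antitoneOn_of_deriv_nonpos (convex_Icc q p) hcont
      · intro y hy
        rw [interior_Icc] at hy
        exact ((hderiv y (hsub hy)).differentiableAt).differentiableWithinAt
      · intro y hy
        rw [interior_Icc] at hy
        rw [(hderiv y (hsub hy)).deriv]
        apply div_nonpos_of_nonpos_of_nonneg
        · exact mul_nonpos_of_nonpos_of_nonneg (by linarith [hy.2]) (sq_nonneg _)
        · have h1 := (hsub hy).1; have h2 := (hsub hy).2
          nlinarith
    have := hmono (Set.left_mem_Icc.2 hpq) (Set.right_mem_Icc.2 hpq) hpq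
    rw [hFp] at this
    simp only [hF] at this
    linarith

lemma mul_log_div' (p q : ℝ) (hp : 0 ≤ p) (hq : 0 < q) :
    p * Real.log (p / q) = p * Real.log p - p * Real.log q := by
  rcases eq_or_lt_of_le hp with h | h
  · simp [← h]
  · rw [Real.log_div h.ne' hq.ne']; ring

lemma pinsker_bin (p q : ℝ) (hp0 : 0 ≤ p) (hp1 : p ≤ 1) (hq0 : 0 ≤ q) (hq1 : q ≤ 1)
    (h0 : q = 0 → p = 0) (h1 : q = 1 → p = 1) :
    2*(p-q)^2 ≤ p * Real.log (p/q) + (1-p) * Real.log ((1-p)/(1-q)) := by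
  rcases eq_or_lt_of_le hq0 with h | hq0'
  · have hp : p = 0 := h0 h.symm
    subst hp; rw [← h]; simp
  rcases eq_or_lt_of_le hq1 with h | hq1'
  · have hp : p = 1 := h1 h
    subst hp; rw [h]; simp
  have hk := klBin p q hp0 hp1 hq0' hq1'
  rw [mul_log_div' p q hp0 hq0', mul_log_div' (1-p) (1-q) (by linarith) (by linarith)]
  linarith

lemma ofFn_snoc' {n : ℕ} (x : Fin n → Bool) (b : Bool) :
    List.ofFn (Fin.snoc x b : Fin (n+1) → Bool) = List.ofFn x ++ [b] := by
  rw [List.ofFn_succ']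
  simp [List.concat_eq_append]

lemma sum_snoc {n : ℕ} (f : (Fin (n+1) → Bool) → ℝ) :
    ∑ y : Fin (n+1) → Bool, f y = ∑ x : Fin n → Bool, ∑ b : Bool, f (Fin.snoc x b) := by
  rw [← (Fin.snocEquiv (fun _ => Bool)).sum_comp f, Fintype.sum_prod_type]
  rw [Finset.sum_comm]
  rfl

lemma IsDistr.le_drop {μ : List Bool → ℝ} (h : IsDistr μ) (x : List Bool) (b : Bool) :
    μ (x ++ [b]) ≤ μ x := by
  have h2 := h.2.2 x
  cases b
  · have := h.1 (x ++ [true]); linarith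
  · have := h.1 (x ++ [false]); linarith

lemma IsDistr.sum_ofFn {μ : List Bool → ℝ} (h : IsDistr μ) (t : ℕ) :
    ∑ x : Fin t → Bool, μ (List.ofFn x) = 1 := by
  induction t with
  | zero => simpa using h.2.1
  | succ t ih =>
    rw [sum_snoc fun y => μ (List.ofFn y)]
    rw [← ih]
    refine Finset.sum_congr rfl fun x _ => ?_
    simp only [ofFn_snoc']
    rw [Fintype.sum_bool, h.2.2 (List.ofFn x)]
    ring

lemma key_step (μ ξ : List Bool → ℝ) (hμ : IsDistr μ)
    (w : ℝ) (hw : 0 < w) (hle : ∀ x, w * μ x ≤ ξ x) (x : List Bool) :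
    ∑ b : Bool, μ (x ++ [b]) * Real.log (μ (x ++ [b]) / ξ (x ++ [b]))
      = μ x * Real.log (μ x / ξ x) + μ x * instEnt μ ξ x := by
  rcases eq_or_lt_of_le (hμ.1 x) with hx | hx
  · have hx0 : μ x = 0 := hx.symm
    have h0 : ∀ b, μ (x ++ [b]) = 0 := fun b =>
      le_antisymm (hx0 ▸ hμ.le_drop x b) (hμ.1 _)
    simp [h0, hx0]
  · have hξx : 0 < ξ x := lt_of_lt_of_le (by positivity) (hle x)
    have hper : ∀ b : Bool, μ (x ++ [b]) * Real.log (μ (x ++ [b]) / ξ (x ++ [b]))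
        = μ (x ++ [b]) * Real.log (μ x / ξ x)
          + μ x * (condP μ x b * Real.log (condP μ x b / condP ξ x b)) := by
      intro b
      rcases eq_or_lt_of_le (hμ.1 (x ++ [b])) with hxb | hxb
      · simp [condP, ← hxb]
      · have hξxb : 0 < ξ (x ++ [b]) := lt_of_lt_of_le (by positivity) (hle _)
        have harg : μ (x ++ [b]) / ξ (x ++ [b])
            = (μ x / ξ x) * ((μ (x ++ [b]) / μ x) / (ξ (x ++ [b]) / ξ x)) := by
          field_simp
        have h1 : μ x / ξ x ≠ 0 := ne_of_gt (by positivity)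
        have h2 : (μ (x ++ [b]) / μ x) / (ξ (x ++ [b]) / ξ x) ≠ 0 :=
          ne_of_gt (by positivity)
        rw [condP, condP, harg, Real.log_mul h1 h2]
        field_simp
    rw [Fintype.sum_bool, hper true, hper false, instEnt, Fintype.sum_bool]
    have h22 := hμ.2.2 x
    linear_combination (-Real.log (μ x / ξ x)) * h22

lemma D_step (μ ξ : List Bool → ℝ) (hμ : IsDistr μ)
    (w : ℝ) (hw : 0 < w) (hle : ∀ x, w * μ x ≤ ξ x) (t : ℕ) :
    ∑ y : Fin (t+1) → Bool, μ (List.ofFn y) * Real.log (μ (List.ofFn y) / ξ (List.ofFn y))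
      = (∑ x : Fin t → Bool, μ (List.ofFn x) * Real.log (μ (List.ofFn x) / ξ (List.ofFn x)))
        + ∑ x : Fin t → Bool, μ (List.ofFn x) * instEnt μ ξ (List.ofFn x) := by
  rw [sum_snoc fun y => μ (List.ofFn y) * Real.log (μ (List.ofFn y) / ξ (List.ofFn y)),
    ← Finset.sum_add_distrib]
  refine Finset.sum_congr rfl fun x _ => ?_
  simp only [ofFn_snoc']
  exact key_step μ ξ hμ w hw hle (List.ofFn x)

lemma totalEnt_eq (μ ξ : List Bool → ℝ) (hμ : IsDistr μ) (hξ : IsDistr ξ)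
    (w : ℝ) (hw : 0 < w) (hle : ∀ x, w * μ x ≤ ξ x) (n : ℕ) :
    totalEnt μ ξ n
      = ∑ y : Fin n → Bool, μ (List.ofFn y) * Real.log (μ (List.ofFn y) / ξ (List.ofFn y)) := by
  have tele := Finset.sum_range_sub
    (fun t => ∑ y : Fin t → Bool, μ (List.ofFn y) * Real.log (μ (List.ofFn y) / ξ (List.ofFn y))) n
  have h0 : ∑ y : Fin 0 → Bool, μ (List.ofFn y) * Real.log (μ (List.ofFn y) / ξ (List.ofFn y))
      = 0 := by simp [hμ.2.1, hξ.2.1]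
  rw [totalEnt]
  calc (∑ t ∈ Finset.range n, ∑ x : Fin t → Bool, μ (List.ofFn x) * instEnt μ ξ (List.ofFn x))
      = ∑ t ∈ Finset.range n,
          ((∑ y : Fin (t+1) → Bool, μ (List.ofFn y) * Real.log (μ (List.ofFn y) / ξ (List.ofFn y)))
            - ∑ y : Fin t → Bool, μ (List.ofFn y) * Real.log (μ (List.ofFn y) / ξ (List.ofFn y))) := by
        refine Finset.sum_congr rfl fun t _ => ?_
        rw [D_step μ ξ hμ w hw hle t]; ring
    _ = _ := by rw [tele, h0]; ring

lemma sq_le_instEnt (μ ξ : List Bool → ℝ) (hμ : IsDistr μ) (hξ : IsDistr ξ)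
    (w : ℝ) (hw : 0 < w) (hle : ∀ x, w * μ x ≤ ξ x) (x : List Bool) :
    ∑ b : Bool, μ x * (condP μ x b - condP ξ x b)^2 ≤ μ x * instEnt μ ξ x := by
  rcases eq_or_lt_of_le (hμ.1 x) with hx | hx
  · simp [← hx]
  have hξx : 0 < ξ x := lt_of_lt_of_le (by positivity) (hle x)
  have hpt : condP μ x true = 1 - condP μ x false := by
    unfold condP
    field_simp
    linarith [hμ.2.2 x]
  have hqt : condP ξ x true = 1 - condP ξ x false := by
    unfold condP
    field_simp
    linarith [hξ.2.2 x]
  set p := condP μ x false with hp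
  set q := condP ξ x false with hq
  have hp0 : 0 ≤ p := div_nonneg (hμ.1 _) hx.le
  have hp1 : p ≤ 1 := by
    rw [hp, condP, div_le_one hx]; exact hμ.le_drop x false
  have hq0 : 0 ≤ q := div_nonneg (hξ.1 _) hξx.le
  have hq1 : q ≤ 1 := by
    rw [hq, condP, div_le_one hξx]; exact hξ.le_drop x false
  have h0 : q = 0 → p = 0 := by
    intro h
    have hz : ξ (x ++ [false]) = 0 := by
      rw [hq, condP, div_eq_zero_iff] at h
      rcases h with h | h
      · exact h
      · exact absurd h hξx.ne'
    have : μ (x ++ [false]) = 0 :=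
      le_antisymm (by nlinarith [hle (x ++ [false])]) (hμ.1 _)
    rw [hp, condP, this, zero_div]
  have h1 : q = 1 → p = 1 := by
    intro h
    have hqt0 : condP ξ x true = 0 := by rw [hqt, h]; ring
    have hz : ξ (x ++ [true]) = 0 := by
      rw [condP, div_eq_zero_iff] at hqt0
      rcases hqt0 with h' | h'
      · exact h'
      · exact absurd h' hξx.ne'
    have hm : μ (x ++ [true]) = 0 :=
      le_antisymm (by nlinarith [hle (x ++ [true])]) (hμ.1 _)
    have hmt : condP μ x true = 0 := by rw [condP, hm, zero_div]
    rw [hpt] at hmt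
    linarith
  have hkey := pinsker_bin p q hp0 hp1 hq0 hq1 h0 h1
  rw [instEnt, Fintype.sum_bool, Fintype.sum_bool, hpt, hqt]
  nlinarith [mul_le_mul_of_nonneg_left hkey hx.le]

/-- Theorem 1(i): for every `n ≥ 1`,
`∑_{t=1}^n ∑_{x_{1:t}} μ(x_{<t}) (μ(x_t|x_{<t}) − ξ(x_t|x_{<t}))² ≤ H_n ≤ ln (1/w_μ)`. -/
theorem convergence_sum_bound {ι : Type*} [Countable ι]
    (μs : ι → List Bool → ℝ) (w : ι → ℝ)
    (hμs : ∀ i, IsDistr (μs i)) (hw : ∀ i, 0 < w i) (hw1 : HasSum w 1)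
    (ξ : List Bool → ℝ) (hξ : ∀ x, HasSum (fun i => w i * μs i x) (ξ x))
    (i₀ : ι) (n : ℕ) (hn : 1 ≤ n) :
    (∑ t ∈ Finset.range n, ∑ x : Fin t → Bool, ∑ b : Bool,
        μs i₀ (List.ofFn x) *
          (condP (μs i₀) (List.ofFn x) b - condP ξ (List.ofFn x) b) ^ 2)
      ≤ totalEnt (μs i₀) ξ n ∧
    totalEnt (μs i₀) ξ n ≤ Real.log (1 / w i₀) := by
  have hle : ∀ x, w i₀ * μs i₀ x ≤ ξ x := fun x =>
    le_hasSum (hξ x) i₀ fun j _ => mul_nonneg (hw j).le ((hμs j).1 x)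
  have hξd : IsDistr ξ := by
    refine ⟨fun x => le_trans (mul_nonneg (hw i₀).le ((hμs i₀).1 x)) (hle x), ?_, fun x => ?_⟩
    · have hfun : (fun i => w i * μs i ([] : List Bool)) = w :=
        funext fun i => by rw [(hμs i).2.1, mul_one]
      have h1 : HasSum (fun i => w i * μs i ([] : List Bool)) 1 := by rw [hfun]; exact hw1
      exact (hξ []).unique h1
    · have hfun : (fun i => w i * μs i (x ++ [false]) + w i * μs i (x ++ [true]))
          = fun i => w i * μs i x := funext fun i => by rw [(hμs i).2.2 x]; ring
      have h1 : HasSum (fun i => w i * μs i x) (ξ (x ++ [false]) + ξ (x ++ [true])) := by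
        rw [← hfun]; exact (hξ (x ++ [false])).add (hξ (x ++ [true]))
      exact (hξ x).unique h1
  constructor
  · rw [totalEnt]
    refine Finset.sum_le_sum fun t _ => Finset.sum_le_sum fun x _ => ?_
    exact sq_le_instEnt (μs i₀) ξ (hμs i₀) hξd (w i₀) (hw i₀) hle (List.ofFn x)
  · rw [totalEnt_eq (μs i₀) ξ (hμs i₀) hξd (w i₀) (hw i₀) hle n]
    have hsum1 := (hμs i₀).sum_ofFn n
    calc ∑ y : Fin n → Bool,
          μs i₀ (List.ofFn y) * Real.log (μs i₀ (List.ofFn y) / ξ (List.ofFn y))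
        ≤ ∑ y : Fin n → Bool, μs i₀ (List.ofFn y) * Real.log (1 / w i₀) := by
          refine Finset.sum_le_sum fun y _ => ?_
          rcases eq_or_lt_of_le ((hμs i₀).1 (List.ofFn y)) with h | h
          · rw [← h]; simp
          · have hξy : 0 < ξ (List.ofFn y) := lt_of_lt_of_le (mul_pos (hw i₀) h) (hle _)
            have hr : μs i₀ (List.ofFn y) / ξ (List.ofFn y) ≤ 1 / w i₀ := by
              rw [div_le_div_iff₀ hξy (hw i₀)]
              linarith [hle (List.ofFn y)]
            exact mul_le_mul_of_nonneg_left (Real.log_le_log (by positivity) hr) h.le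
      _ = Real.log (1 / w i₀) := by rw [← Finset.sum_mul, hsum1, one_mul]
end

section
/- Unit loss bound: for every n ≥ 1, 0 ≤ L_{nΛξ} − L_{nΛμ} ≤ H_n + √(4 L_{nΛμ} H_n + H_n²), where H_n ≤ ln(1/w_μ) is the relative entropy between μ and ξ. -/
/-!
Fix a history and let `p`, `q` be the `μ`- and `ξ`-probabilities that the next bit is `true`.
When the `ξ`-optimal prediction loses more than the `μ`-optimal one under `μ` but not under `ξ`,
the two outcome-wise loss differences have opposite signs, and a Pinsker-type inequality
`KL(p ‖ q) ≥ (p - q)² / (2K)`, with `K` bounding `x (1 - x)` between `q` and `p`, turns this into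
`(loss gap)² ≤ 2 h_t · (sum of the two losses)`. Cauchy–Schwarz over all histories gives
`(L_ξ - L_μ)² ≤ 2 H_n (L_ξ + L_μ)`, a quadratic inequality whose solution is the claimed bound.
Finally `H_n` telescopes to the relative entropy of `μ` and `ξ` on strings of length `n`, which is
at most `ln (1 / w_μ)` because `ξ ≥ w_μ μ`.
-/

open Finset Filter

open Real

lemma mul_log_div (a : ℝ) {b : ℝ} (hb : b ≠ 0) : a * log (a / b) = a * log a - a * log b := by
  rcases eq_or_ne a 0 with rfl | ha
  · simp
  · rw [log_div ha hb]; ring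

lemma sum_le_sqrt_mul_sqrt_of_le {ι : Type*} {s : Finset ι} {d f g : ι → ℝ}
    (hf : ∀ i, 0 ≤ f i) (hg : ∀ i, 0 ≤ g i) (h : ∀ i ∈ s, d i ≤ √(f i) * √(g i)) :
    ∑ i ∈ s, d i ≤ √(∑ i ∈ s, f i) * √(∑ i ∈ s, g i) :=
  (Finset.sum_le_sum h).trans (Real.sum_sqrt_mul_sqrt_le s hf hg)

lemma sub_le_add_sqrt {a b H : ℝ} (hba : b ≤ a) (hb : 0 ≤ b) (hH : 0 ≤ H)
    (h : a - b ≤ √(2 * H) * √(a + b)) : a - b ≤ H + √(4 * b * H + H ^ 2) := by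
  have hsq : (a - b) ^ 2 ≤ 2 * H * (a + b) := by
    calc (a - b) ^ 2 ≤ (√(2 * H) * √(a + b)) ^ 2 := pow_le_pow_left₀ (sub_nonneg.2 hba) h 2
      _ = 2 * H * (a + b) := by rw [mul_pow, sq_sqrt (by positivity), sq_sqrt (by linarith)]
  have := abs_le_sqrt (x := a - b - H) (y := 4 * b * H + H ^ 2) (by nlinarith)
  linarith [le_abs_self (a - b - H)]

lemma mul_one_sub_le_mul_max {p q x : ℝ} (hq : 0 ≤ q) (hqx : q ≤ x) (hxp : x ≤ p) (hp : p ≤ 1) :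
    x * (1 - x) ≤ (p * (1 - q) + q * (1 - p)) * max q (1 - q) := by
  rcases le_total (1 / 2) q with hq2 | hq2
  · rw [max_eq_left (by linarith)]
    nlinarith [mul_nonneg (sub_nonneg.2 hqx) (by linarith : 0 ≤ x + q - 1),
      mul_nonneg (by linarith : 0 ≤ 1 - p) (by linarith : 0 ≤ 2 * q - 1)]
  rw [max_eq_right (by linarith)]
  rcases le_total p (1 / 2) with hp2 | hp2
  · nlinarith [mul_nonneg (sub_nonneg.2 hxp) (by linarith : 0 ≤ 1 - x - p),
      mul_nonneg (mul_nonneg (by linarith : 0 ≤ 1 - p) (by linarith : 0 ≤ q))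
        (by linarith : 0 ≤ 1 - p - q),
      mul_nonneg (mul_nonneg (by linarith : 0 ≤ p) (by linarith : 0 ≤ p - q))
        (by linarith : 0 ≤ 1 - q)]
  · nlinarith [sq_nonneg (x - 1 / 2),
      mul_nonneg (by linarith : 0 ≤ 1 - 2 * q) (by linarith : 0 ≤ 2 * p - 1)]

noncomputable def bernoulliKL (p q : ℝ) : ℝ :=
  p * log (p / q) + (1 - p) * log ((1 - p) / (1 - q))

lemma bernoulliKL_self (p : ℝ) : bernoulliKL p p = 0 := by
  rcases eq_or_ne p 0 with rfl | h0
  · simp [bernoulliKL]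
  rcases eq_or_ne (1 - p) 0 with h1 | h1
  · simp [bernoulliKL, h1, div_self h0]
  · simp [bernoulliKL, div_self h0, div_self h1]

lemma bernoulliKL_one_sub (p q : ℝ) : bernoulliKL (1 - p) (1 - q) = bernoulliKL p q := by
  simp only [bernoulliKL, sub_sub_cancel]; ring

lemma sq_div_le_bernoulliKL {p q K : ℝ} (hq : 0 < q) (hqp : q ≤ p) (hp : p ≤ 1) (hK : 0 < K)
    (hvar : ∀ x ∈ Set.Ioo q p, x * (1 - x) ≤ K) :
    (p - q) ^ 2 / (2 * K) ≤ bernoulliKL p q := by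
  rcases hqp.eq_or_lt with rfl | hqp
  · simp [bernoulliKL_self]
  set g : ℝ → ℝ := fun x => -(p * log x) - (1 - p) * log (1 - x) - (p - x) ^ 2 / (2 * K)
  have hcont : ContinuousOn g (Set.Icc q p) := by
    have hlog : ContinuousOn log (Set.Icc q p) :=
      continuousOn_log.mono fun x hx => (hq.trans_le hx.1).ne'
    have hlog1 : ContinuousOn (fun x => (1 - p) * log (1 - x)) (Set.Icc q p) := by
      -- at `p = 1` the term vanishes, although `log (1 - x)` jumps at `x = 1` (`log 0 = 0`)
      rcases hp.lt_or_eq with hp1 | rfl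
      · exact continuousOn_const.mul
          (ContinuousOn.log (f := fun x => 1 - x) (by fun_prop) fun x hx => by linarith [hx.2])
      · simpa using continuousOn_const
    exact ((continuousOn_const.mul hlog).neg.sub hlog1).sub (by fun_prop)
  have hderiv : ∀ x ∈ Set.Ioo q p,
      HasDerivAt g ((p - x) * (1 / K - 1 / (x * (1 - x)))) x := by
    intro x hx
    have hx0 : 0 < x := hq.trans hx.1
    have hx1 : 0 < 1 - x := by linarith [hx.2]
    refine ((((hasDerivAt_log hx0.ne').const_mul p).neg.sub
      ((((hasDerivAt_id x).const_sub 1).log hx1.ne').const_mul (1 - p))).sub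
      ((((hasDerivAt_id x).const_sub p).pow 2).div_const (2 * K))).congr_deriv ?_
    simp only [id]
    field_simp
    ring
  have hanti : AntitoneOn g (Set.Icc q p) := by
    refine antitoneOn_of_hasDerivWithinAt_nonpos (convex_Icc q p) hcont
      (f' := fun x => (p - x) * (1 / K - 1 / (x * (1 - x)))) (fun x hx => ?_) fun x hx => ?_ <;>
      rw [interior_Icc] at hx
    · exact (hderiv x hx).hasDerivWithinAt
    · have hx0 : 0 < x * (1 - x) := mul_pos (hq.trans hx.1) (by linarith [hx.2])
      exact mul_nonpos_of_nonneg_of_nonpos (by linarith [hx.2])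
        (sub_nonpos.2 (one_div_le_one_div_of_le hx0 (hvar x hx)))
  have hgpq := hanti (Set.left_mem_Icc.2 hqp.le) (Set.right_mem_Icc.2 hqp.le) hqp.le
  simp only [g, sub_self] at hgpq
  rw [bernoulliKL, mul_log_div p hq.ne', mul_log_div (1 - p) (by linarith)]
  norm_num at hgpq
  linarith

lemma bernoulliKL_nonneg {p q : ℝ} (hp0 : 0 ≤ p) (hp1 : p ≤ 1) (hq0 : 0 ≤ q) (hq1 : q ≤ 1)
    (h0 : q = 0 → p = 0) (h1 : q = 1 → p = 1) : 0 ≤ bernoulliKL p q := by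
  wlog hqp : q ≤ p generalizing p q
  · rw [← bernoulliKL_one_sub]
    exact this (by linarith) (by linarith) (by linarith) (by linarith)
      (fun h => by linarith [h1 (by linarith)]) (fun h => by linarith [h0 (by linarith)])
      (by linarith)
  rcases hq0.eq_or_lt with rfl | hq
  · rw [h0 rfl, bernoulliKL_self]
  · refine le_trans (by positivity) (sq_div_le_bernoulliKL hq hqp hp1 (K := 1 / 4) (by norm_num)
      fun x _ => by nlinarith [sq_nonneg (x - 1 / 2)])

lemma sq_le_two_bernoulliKL_mul_of_lt {p q A B : ℝ} (hq : 0 < q) (hqp : q < p) (hp : p ≤ 1)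
    (hA1 : A ≤ 1) (hB0 : 0 ≤ B) (hB1 : B ≤ 1) (hopt : q * B ≤ (1 - q) * A)
    (hgap : 0 ≤ p * B - (1 - p) * A) :
    (p * B - (1 - p) * A) ^ 2 ≤ 2 * bernoulliKL p q * (p * B + (1 - p) * A) := by
  have hc : 0 < p * (1 - q) + q * (1 - p) := by nlinarith
  have hm : 0 < max q (1 - q) := lt_max_of_lt_left hq
  -- with this `K`, the product of `hcΔ` and `hmΔ` below is `K · gap² ≤ (p - q)² · sum`
  have hK := mul_pos hc hm
  have hKL := sq_div_le_bernoulliKL hq hqp.le hp hK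
    fun x hx => mul_one_sub_le_mul_max hq.le hx.1.le hx.2.le hp
  rw [div_le_iff₀ (by positivity)] at hKL
  have hA0 : 0 ≤ A := by nlinarith
  have hS : 0 ≤ p * B + (1 - p) * A := by nlinarith
  have hcΔ : (p * (1 - q) + q * (1 - p)) * (p * B - (1 - p) * A) ≤
      (p - q) * (p * B + (1 - p) * A) := by
    nlinarith [mul_nonneg (mul_nonneg (hq.trans hqp).le (by linarith : 0 ≤ 1 - p))
      (by linarith : 0 ≤ (1 - q) * A - q * B)]
  have hmΔ : max q (1 - q) * (p * B - (1 - p) * A) ≤ p - q := by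
    rw [max_mul_of_nonneg _ _ hgap]
    exact max_le (by nlinarith) (by nlinarith)
  refine le_of_mul_le_mul_left ?_ hK
  calc _ = ((p * (1 - q) + q * (1 - p)) * (p * B - (1 - p) * A)) *
        (max q (1 - q) * (p * B - (1 - p) * A)) := by ring
    _ ≤ ((p - q) * (p * B + (1 - p) * A)) * (p - q) :=
        mul_le_mul hcΔ hmΔ (by positivity) (by nlinarith)
    _ ≤ _ := by nlinarith

lemma sq_le_two_bernoulliKL_mul {p q α β : ℝ} (hp0 : 0 ≤ p) (hp1 : p ≤ 1) (hq0 : 0 ≤ q)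
    (hq1 : q ≤ 1) (h0 : q = 0 → p = 0) (h1 : q = 1 → p = 1) (hα : |α| ≤ 1) (hβ : |β| ≤ 1)
    (hopt : (1 - q) * α + q * β ≤ 0) (hgap : 0 ≤ (1 - p) * α + p * β) :
    ((1 - p) * α + p * β) ^ 2 ≤ 2 * bernoulliKL p q * ((1 - p) * |α| + p * |β|) := by
  wlog hqp : q ≤ p generalizing p q α β
  · have := this (p := 1 - p) (q := 1 - q) (α := β) (β := α) (by linarith) (by linarith)
      (by linarith) (by linarith) (fun h => by linarith [h1 (by linarith)])
      (fun h => by linarith [h0 (by linarith)]) hβ hα (by linarith) (by linarith) (by linarith)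
    rw [bernoulliKL_one_sub] at this
    convert this using 2 <;> ring
  rcases hqp.eq_or_lt with rfl | hqp
  · rw [le_antisymm hopt hgap, bernoulliKL_self]
    simp
  have hq : 0 < q := hq0.lt_of_ne fun h => by linarith [h0 h.symm]
  have hαβ : α ≤ β := by nlinarith
  have hα0 : α ≤ 0 := by nlinarith
  have hβ0 : 0 ≤ β := by nlinarith
  rw [abs_of_nonpos hα0, abs_of_nonneg hβ0]
  have := sq_le_two_bernoulliKL_mul_of_lt (A := -α) (B := β) hq hqp hp1
    (by linarith [neg_le_abs α]) hβ0 (le_abs_self β |>.trans hβ) (by linarith) (by linarith)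
  convert this using 2 <;> ring

lemma sum_ofFn_succ (F : List Bool → ℝ) (t : ℕ) :
    ∑ y : Fin (t + 1) → Bool, F (List.ofFn y) =
      ∑ x : Fin t → Bool, ∑ b : Bool, F (List.ofFn x ++ [b]) := by
  rw [← (Fin.snocEquiv fun _ => Bool).sum_comp, Fintype.sum_prod_type, Finset.sum_comm]
  refine Fintype.sum_congr _ _ fun x => Fintype.sum_congr _ _ fun b => ?_
  rw [List.ofFn_succ_last]
  simp

lemma sum_histories_le_sqrt_mul_sqrt {d f g : List Bool → ℝ} (hf : ∀ x, 0 ≤ f x)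
    (hg : ∀ x, 0 ≤ g x) (h : ∀ x, d x ≤ √(f x) * √(g x)) (n : ℕ) :
    ∑ t ∈ Finset.range n, ∑ x : Fin t → Bool, d (List.ofFn x) ≤
      √(∑ t ∈ Finset.range n, ∑ x : Fin t → Bool, f (List.ofFn x)) *
        √(∑ t ∈ Finset.range n, ∑ x : Fin t → Bool, g (List.ofFn x)) :=
  sum_le_sqrt_mul_sqrt_of_le (fun _ => Finset.sum_nonneg fun _ _ => hf _)
    (fun _ => Finset.sum_nonneg fun _ _ => hg _) fun _ _ =>
      sum_le_sqrt_mul_sqrt_of_le (fun _ => hf _) (fun _ => hg _) fun _ _ => h _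

namespace IsDistr

variable {ρ : List Bool → ℝ}

lemma sum_concat (hρ : IsDistr ρ) (x : List Bool) : ∑ b : Bool, ρ (x ++ [b]) = ρ x := by
  rw [Fintype.sum_bool, add_comm, ← hρ.2.2 x]

lemma apply_concat_le (hρ : IsDistr ρ) (x : List Bool) (b : Bool) : ρ (x ++ [b]) ≤ ρ x := by
  rw [← hρ.sum_concat x]
  exact Finset.single_le_sum (f := fun b => ρ (x ++ [b])) (fun b _ => hρ.1 _) (Finset.mem_univ b)

lemma condP_nonneg (hρ : IsDistr ρ) (x : List Bool) (b : Bool) : 0 ≤ condP ρ x b :=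
  div_nonneg (hρ.1 _) (hρ.1 _)

lemma condP_le_one (hρ : IsDistr ρ) (x : List Bool) (b : Bool) : condP ρ x b ≤ 1 :=
  div_le_one_of_le₀ (hρ.apply_concat_le x b) (hρ.1 x)

lemma condP_false (hρ : IsDistr ρ) {x : List Bool} (hx : ρ x ≠ 0) :
    condP ρ x false = 1 - condP ρ x true := by
  rw [eq_sub_iff_add_eq, condP, condP, ← add_div, ← hρ.2.2 x, div_self hx]

lemma expLoss_eq (hρ : IsDistr ρ) (l : Bool → Bool → ℝ) {x : List Bool} (hx : ρ x ≠ 0)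
    (y : Bool) :
    expLoss ρ l x y = (1 - condP ρ x true) * l false y + condP ρ x true * l true y := by
  rw [expLoss, Fintype.sum_bool, condP_false hρ hx]
  ring

lemma sum_ofFn_s5 (hρ : IsDistr ρ) (t : ℕ) :
    ∑ x : Fin t → Bool, ρ (List.ofFn x) = 1 := by
  induction t with
  | zero => simp [hρ.2.1]
  | succ t ih => simp only [sum_ofFn_succ, hρ.sum_concat, ih]

end IsDistr

section Dominated

variable {μ ξ : List Bool → ℝ}

lemma instEnt_eq_bernoulliKL (hμ : IsDistr μ) (hξ : IsDistr ξ) {x : List Bool} (hμx : μ x ≠ 0)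
    (hξx : ξ x ≠ 0) :
    instEnt μ ξ x = bernoulliKL (condP μ x true) (condP ξ x true) := by
  rw [instEnt, Fintype.sum_bool, hμ.condP_false hμx, hξ.condP_false hξx, bernoulliKL]

lemma condP_eq_zero_of_condP_eq_zero (hdom : ∀ x, ξ x = 0 → μ x = 0) {x : List Bool}
    (hξx : ξ x ≠ 0) {b : Bool} (h : condP ξ x b = 0) : condP μ x b = 0 := by
  rw [condP, div_eq_zero_iff] at h ⊢
  exact Or.inl (hdom _ (h.resolve_right hξx))

lemma condP_true_eq_one_of_eq_one (hμ : IsDistr μ) (hξ : IsDistr ξ)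
    (hdom : ∀ x, ξ x = 0 → μ x = 0) {x : List Bool} (hμx : μ x ≠ 0) (hξx : ξ x ≠ 0)
    (h : condP ξ x true = 1) : condP μ x true = 1 := by
  have := condP_eq_zero_of_condP_eq_zero hdom hξx (b := false)
    (by rw [hξ.condP_false hξx, h, sub_self])
  rw [hμ.condP_false hμx] at this
  linarith

variable (hμ : IsDistr μ) (hξ : IsDistr ξ) (hdom : ∀ x, ξ x = 0 → μ x = 0)
include hμ hξ hdom

lemma instEnt_nonneg (x : List Bool) : 0 ≤ instEnt μ ξ x := by
  by_cases hμx : μ x = 0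
  · simp [instEnt, condP, hμx]
  have hξx : ξ x ≠ 0 := fun h => hμx (hdom x h)
  rw [instEnt_eq_bernoulliKL hμ hξ hμx hξx]
  exact bernoulliKL_nonneg (hμ.condP_nonneg x true) (hμ.condP_le_one x true)
    (hξ.condP_nonneg x true) (hξ.condP_le_one x true)
    (condP_eq_zero_of_condP_eq_zero hdom hξx) (condP_true_eq_one_of_eq_one hμ hξ hdom hμx hξx)

lemma totalEnt_nonneg (n : ℕ) : 0 ≤ totalEnt μ ξ n :=
  Finset.sum_nonneg fun _ _ => Finset.sum_nonneg fun _ _ =>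
    mul_nonneg (hμ.1 _) (instEnt_nonneg hμ hξ hdom _)

lemma expLoss_sub_le_sqrt (l : Bool → Bool → ℝ) (hl : ∀ a y, l a y ∈ Set.Icc (0 : ℝ) 1)
    (x : List Bool) {yξ yμ : Bool} (hopt : expLoss ξ l x yξ ≤ expLoss ξ l x yμ) :
    expLoss μ l x yξ - expLoss μ l x yμ ≤
      √(2 * instEnt μ ξ x) * √(expLoss μ l x yξ + expLoss μ l x yμ) := by
  by_cases hμx : μ x = 0
  · simp only [expLoss, condP, hμx, div_zero, zero_mul, Finset.sum_const_zero, sub_zero]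
    positivity
  have hξx : ξ x ≠ 0 := fun h => hμx (hdom x h)
  rcases le_or_gt (expLoss μ l x yξ - expLoss μ l x yμ) 0 with hgap | hgap
  · exact hgap.trans (by positivity)
  rw [← sqrt_mul (mul_nonneg zero_le_two (instEnt_nonneg hμ hξ hdom x))]
  apply le_sqrt_of_sq_le
  rw [instEnt_eq_bernoulliKL hμ hξ hμx hξx]
  simp only [hμ.expLoss_eq l hμx, hξ.expLoss_eq l hξx] at hgap hopt ⊢
  have hp0 := hμ.condP_nonneg x true
  have hp1 := hμ.condP_le_one x true
  have hq0 := hξ.condP_nonneg x true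
  have hq1 := hξ.condP_le_one x true
  have h0 := condP_eq_zero_of_condP_eq_zero hdom hξx (b := true)
  have h1 := condP_true_eq_one_of_eq_one hμ hξ hdom hμx hξx
  set p := condP μ x true
  set q := condP ξ x true
  have hle : ∀ a, |l a yξ - l a yμ| ≤ 1 := fun a => abs_sub_le_iff.2
    ⟨by linarith [(hl a yξ).2, (hl a yμ).1], by linarith [(hl a yξ).1, (hl a yμ).2]⟩
  have habs : ∀ a, |l a yξ - l a yμ| ≤ l a yξ + l a yμ := fun a =>
    abs_le.2 ⟨by linarith [(hl a yξ).1], by linarith [(hl a yμ).1]⟩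
  calc _ = ((1 - p) * (l false yξ - l false yμ) + p * (l true yξ - l true yμ)) ^ 2 := by ring
    _ ≤ 2 * bernoulliKL p q * ((1 - p) * |l false yξ - l false yμ| + p * |l true yξ - l true yμ|) :=
      sq_le_two_bernoulliKL_mul hp0 hp1 hq0 hq1 h0 h1 (hle false) (hle true) (by linarith)
        (by linarith)
    _ ≤ _ := by
      refine mul_le_mul_of_nonneg_left ?_
        (mul_nonneg zero_le_two (bernoulliKL_nonneg hp0 hp1 hq0 hq1 h0 h1))
      nlinarith [habs false, habs true]

end Dominated

section ChainRule

variable {μ ξ : List Bool → ℝ} (hμ : IsDistr μ) (hdom : ∀ x, ξ x = 0 → μ x = 0)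
include hμ hdom

lemma mul_condP_mul_log_eq (x : List Bool) (b : Bool) :
    μ x * (condP μ x b * log (condP μ x b / condP ξ x b)) =
      μ (x ++ [b]) * log (μ (x ++ [b]) / ξ (x ++ [b])) - μ (x ++ [b]) * log (μ x / ξ x) := by
  by_cases hb : μ (x ++ [b]) = 0
  · simp [condP, hb]
  have hx : μ x ≠ 0 := fun h => hb (le_antisymm (h ▸ hμ.apply_concat_le x b) (hμ.1 _))
  have hξb : ξ (x ++ [b]) ≠ 0 := fun h => hb (hdom _ h)
  have hξx : ξ x ≠ 0 := fun h => hx (hdom _ h)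
  rw [condP, condP, div_div_div_comm, log_div (by positivity) (by positivity)]
  field_simp

lemma mul_instEnt_eq (x : List Bool) :
    μ x * instEnt μ ξ x =
      ∑ b : Bool, μ (x ++ [b]) * log (μ (x ++ [b]) / ξ (x ++ [b])) - μ x * log (μ x / ξ x) := by
  rw [instEnt, Finset.mul_sum, Finset.sum_congr rfl fun b _ => mul_condP_mul_log_eq hμ hdom x b,
    Finset.sum_sub_distrib, ← Finset.sum_mul, hμ.sum_concat]

lemma totalEnt_eq_sum (hξ : IsDistr ξ) (n : ℕ) :
    totalEnt μ ξ n =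
      ∑ y : Fin n → Bool, μ (List.ofFn y) * log (μ (List.ofFn y) / ξ (List.ofFn y)) := by
  rw [totalEnt, Finset.sum_congr rfl fun t _ => by
    rw [Finset.sum_congr rfl fun x _ => mul_instEnt_eq hμ hdom _, Finset.sum_sub_distrib,
      ← sum_ofFn_succ (fun y => μ y * log (μ y / ξ y))],
    Finset.sum_range_sub (fun t => ∑ y : Fin t → Bool,
      μ (List.ofFn y) * log (μ (List.ofFn y) / ξ (List.ofFn y)))]
  simp [hμ.2.1, hξ.2.1]

end ChainRule

section Mixture

variable {ι : Type*} {μs : ι → List Bool → ℝ} {w : ι → ℝ} {ξ : List Bool → ℝ}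
  (hμs : ∀ i, IsDistr (μs i)) (hw : ∀ i, 0 ≤ w i) (hξ : ∀ x, HasSum (fun i => w i * μs i x) (ξ x))
include hμs hw hξ

lemma mul_le_of_hasSum (i : ι) (x : List Bool) : w i * μs i x ≤ ξ x :=
  le_hasSum (hξ x) i fun j _ => mul_nonneg (hw j) ((hμs j).1 x)

lemma isDistr_of_hasSum (hw1 : HasSum w 1) : IsDistr ξ := by
  refine ⟨fun x => hasSum_le (fun i => mul_nonneg (hw i) ((hμs i).1 x)) hasSum_zero (hξ x),
    (hξ []).unique (by simpa [(hμs _).2.1] using hw1), fun x => (hξ x).unique ?_⟩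
  have h : (fun i => w i * μs i (x ++ [false]) + w i * μs i (x ++ [true])) =
      fun i => w i * μs i x := funext fun i => by rw [← mul_add, ← (hμs i).2.2 x]
  exact h ▸ (hξ (x ++ [false])).add (hξ (x ++ [true]))

end Mixture

lemma eq_zero_of_forall_mul_le {μ ξ : List Bool → ℝ} {c : ℝ} (hc : 0 < c) (hμ0 : ∀ x, 0 ≤ μ x)
    (h : ∀ x, c * μ x ≤ ξ x) (x : List Bool) (hx : ξ x = 0) : μ x = 0 :=
  le_antisymm (nonpos_of_mul_nonpos_right ((h x).trans hx.le) hc) (hμ0 x)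

lemma totalEnt_le_log {μ ξ : List Bool → ℝ} (hμ : IsDistr μ) (hξ : IsDistr ξ) {c : ℝ}
    (hc : 0 < c) (hdom : ∀ x, c * μ x ≤ ξ x) (n : ℕ) : totalEnt μ ξ n ≤ log (1 / c) := by
  rw [totalEnt_eq_sum hμ (eq_zero_of_forall_mul_le hc hμ.1 hdom) hξ]
  calc _ ≤ ∑ y : Fin n → Bool, μ (List.ofFn y) * log (1 / c) := Finset.sum_le_sum fun y _ => ?_
    _ = log (1 / c) := by rw [← Finset.sum_mul, hμ.sum_ofFn_s5, one_mul]
  rcases (hμ.1 (List.ofFn y)).eq_or_lt with h | h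
  · simp [← h]
  have hξy : 0 < ξ (List.ofFn y) := (mul_pos hc h).trans_le (hdom _)
  refine mul_le_mul_of_nonneg_left (log_le_log (div_pos h hξy) ?_) h.le
  rw [div_le_div_iff₀ hξy hc]
  linarith [hdom (List.ofFn y)]

section Loss

variable {μ : List Bool → ℝ} {l : Bool → Bool → ℝ}

lemma totalLoss_le_of_isPredictor (hμ0 : ∀ x, 0 ≤ μ x) {Y : List Bool → Bool}
    (hY : IsPredictor μ l Y) (Y' : List Bool → Bool) (n : ℕ) :
    totalLoss μ l Y n ≤ totalLoss μ l Y' n :=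
  Finset.sum_le_sum fun _ _ => Finset.sum_le_sum fun _ _ =>
    mul_le_mul_of_nonneg_left (hY _ _) (hμ0 _)

variable (hμ : IsDistr μ) (hl : ∀ a y, l a y ∈ Set.Icc (0 : ℝ) 1)
include hμ hl

lemma mul_expLoss_nonneg (x : List Bool) (y : Bool) : 0 ≤ μ x * expLoss μ l x y :=
  mul_nonneg (hμ.1 x) (Finset.sum_nonneg fun b _ => mul_nonneg (hμ.condP_nonneg x b) (hl b y).1)

lemma totalLoss_nonneg (Y : List Bool → Bool) (n : ℕ) : 0 ≤ totalLoss μ l Y n :=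
  Finset.sum_nonneg fun _ _ => Finset.sum_nonneg fun _ _ => mul_expLoss_nonneg hμ hl _ _

variable {ξ : List Bool → ℝ} (hξ : IsDistr ξ) (hdom : ∀ x, ξ x = 0 → μ x = 0)
include hξ hdom

lemma totalLoss_sub_le_sqrt {Yξ : List Bool → Bool} (hYξ : IsPredictor ξ l Yξ)
    (Y : List Bool → Bool) (n : ℕ) :
    totalLoss μ l Yξ n - totalLoss μ l Y n ≤
      √(2 * totalEnt μ ξ n) * √(totalLoss μ l Yξ n + totalLoss μ l Y n) := by
  have hf : ∀ x, 0 ≤ 2 * (μ x * instEnt μ ξ x) := fun x =>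
    mul_nonneg zero_le_two (mul_nonneg (hμ.1 x) (instEnt_nonneg hμ hξ hdom x))
  have hg : ∀ x, 0 ≤ μ x * expLoss μ l x (Yξ x) + μ x * expLoss μ l x (Y x) := fun x =>
    add_nonneg (mul_expLoss_nonneg hμ hl _ _) (mul_expLoss_nonneg hμ hl _ _)
  have hterm : ∀ x, μ x * expLoss μ l x (Yξ x) - μ x * expLoss μ l x (Y x) ≤
      √(2 * (μ x * instEnt μ ξ x)) * √(μ x * expLoss μ l x (Yξ x) + μ x * expLoss μ l x (Y x)) := by
    intro x
    rw [← mul_sub, ← mul_add, mul_left_comm, sqrt_mul (hμ.1 x), sqrt_mul (hμ.1 x),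
      mul_mul_mul_comm, mul_self_sqrt (hμ.1 x)]
    exact mul_le_mul_of_nonneg_left
      (expLoss_sub_le_sqrt hμ hξ hdom l hl x (hYξ x (Y x))) (hμ.1 x)
  have := sum_histories_le_sqrt_mul_sqrt hf hg hterm n
  simpa only [totalLoss, totalEnt, Finset.mul_sum, Finset.sum_add_distrib, Finset.sum_sub_distrib]
    using this

end Loss

theorem unit_loss_bound_general {ι : Type*}
    (μs : ι → List Bool → ℝ) (w : ι → ℝ)
    (hμs : ∀ i, IsDistr (μs i)) (hw : ∀ i, 0 < w i) (hw1 : HasSum w 1)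
    (ξ : List Bool → ℝ) (hξ : ∀ x, HasSum (fun i => w i * μs i x) (ξ x))
    (i₀ : ι)
    (l : Bool → Bool → ℝ) (hl : ∀ a y, l a y ∈ Set.Icc (0 : ℝ) 1)
    (Yμ Yξ : List Bool → Bool)
    (hYμ : IsPredictor (μs i₀) l Yμ) (hYξ : IsPredictor ξ l Yξ)
    (n : ℕ) :
    0 ≤ totalLoss (μs i₀) l Yξ n - totalLoss (μs i₀) l Yμ n ∧
    totalLoss (μs i₀) l Yξ n - totalLoss (μs i₀) l Yμ n ≤
      totalEnt (μs i₀) ξ n +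
        Real.sqrt (4 * totalLoss (μs i₀) l Yμ n * totalEnt (μs i₀) ξ n +
          totalEnt (μs i₀) ξ n ^ 2) ∧
    totalEnt (μs i₀) ξ n ≤ Real.log (1 / w i₀) := by
  have hμ := hμs i₀
  have hξd : IsDistr ξ := isDistr_of_hasSum hμs (fun i => (hw i).le) hξ hw1
  have hmix := mul_le_of_hasSum hμs (fun i => (hw i).le) hξ i₀
  have hdom := eq_zero_of_forall_mul_le (hw i₀) hμ.1 hmix
  have hgap := totalLoss_le_of_isPredictor hμ.1 hYμ Yξ n
  exact ⟨sub_nonneg.2 hgap,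
    sub_le_add_sqrt hgap (totalLoss_nonneg hμ hl Yμ n) (totalEnt_nonneg hμ hξd hdom n)
      (totalLoss_sub_le_sqrt hμ hl hξd hdom hYξ Yμ n),
    totalEnt_le_log hμ hξd (hw i₀) hmix n⟩

/-- Theorem 2, unit loss bound: for every `n ≥ 1`,
`0 ≤ L_{nΛξ} − L_{nΛμ} ≤ H_n + √(4 L_{nΛμ} H_n + H_n²)`, where
`H_n ≤ ln (1/w_μ)` is the relative entropy between `μ = μs i₀` and `ξ`. -/
theorem unit_loss_bound {ι : Type*} [Countable ι]
    (μs : ι → List Bool → ℝ) (w : ι → ℝ)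
    (hμs : ∀ i, IsDistr (μs i)) (hw : ∀ i, 0 < w i) (hw1 : HasSum w 1)
    (ξ : List Bool → ℝ) (hξ : ∀ x, HasSum (fun i => w i * μs i x) (ξ x))
    (i₀ : ι)
    (l : Bool → Bool → ℝ) (hl : ∀ a y, l a y ∈ Set.Icc (0 : ℝ) 1)
    (Yμ Yξ : List Bool → Bool)
    (hYμ : IsPredictor (μs i₀) l Yμ) (hYξ : IsPredictor ξ l Yξ)
    (n : ℕ) (hn : 1 ≤ n) :
    0 ≤ totalLoss (μs i₀) l Yξ n - totalLoss (μs i₀) l Yμ n ∧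
    totalLoss (μs i₀) l Yξ n - totalLoss (μs i₀) l Yμ n ≤
      totalEnt (μs i₀) ξ n +
        Real.sqrt (4 * totalLoss (μs i₀) l Yμ n * totalEnt (μs i₀) ξ n +
          totalEnt (μs i₀) ξ n ^ 2) ∧
    totalEnt (μs i₀) ξ n ≤ Real.log (1 / w i₀) :=
  unit_loss_bound_general μs w hμs hw hw1 ξ hξ i₀ l hl Yμ Yξ hYμ hYξ n
end

section
/- Deterministic environments: suppose μ is deterministic, i.e. there is an infinite binary sequence a_1 a_2 ... with μ(x_{1:n}) = 1 if x_{1:n} = a_1...a_n and μ(x_{1:n}) = 0 otherwise, and suppose the loss satisfies l_{00} = l_{11} = 0. Then L_{nΛμ} = 0 for all n, and L_{nΛξ} ≤ 2 H_n ≤ 2 ln(1/w_μ) for all n. -/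
open Finset Filter

/-- `ρ` is deterministic: it equals `1` on all prefixes of one fixed infinite
binary sequence and `0` on all other strings. -/
def IsDeterministic (ρ : List Bool → ℝ) : Prop :=
  ∃ a : ℕ → Bool, ∀ x : List Bool,
    ρ x = if ∀ i : Fin x.length, x.get i = a i.val then 1 else 0

/-- prefix of length `t` of the sequence `a` -/
def detPref (a : ℕ → Bool) (t : ℕ) : List Bool := List.ofFn fun i : Fin t => a i

lemma ofFn_append_singleton {α : Type*} {t : ℕ} (f : Fin t → α) (b : α) :
    List.ofFn f ++ [b] = List.ofFn (Fin.snoc f b) := by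
  rw [List.ofFn_succ' (Fin.snoc f b), List.concat_eq_append]
  simp

lemma aux_key (p L : ℝ) (hp0 : 0 < p) (hp1 : p ≤ 1) (hL0 : 0 ≤ L) (hL1 : L ≤ 1)
    (h : p * L ≤ 1 - p) : L ≤ -(2 * Real.log p) := by
  rcases le_or_gt p (1/2) with h2 | h2
  · have hlog : Real.log p ≤ Real.log (1/2) := Real.log_le_log hp0 h2
    have he : Real.log (1/2) = -Real.log 2 := by rw [one_div, Real.log_inv]
    nlinarith [Real.log_two_gt_d9]
  · have hs := Real.log_le_sub_one_of_pos hp0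
    nlinarith


set_option maxHeartbeats 1000000 in
/-- deterministic environments: if `μ = μs i₀` is
deterministic and `l₀₀ = l₁₁ = 0`, then `L_{nΛμ} = 0` and
`L_{nΛξ} ≤ 2 H_n ≤ 2 ln (1/w_μ)` for all `n`. -/
theorem deterministic_loss_bound {ι : Type*} [Countable ι]
    (μs : ι → List Bool → ℝ) (w : ι → ℝ)
    (hμs : ∀ i, IsDistr (μs i)) (hw : ∀ i, 0 < w i) (hw1 : HasSum w 1)
    (ξ : List Bool → ℝ) (hξ : ∀ x, HasSum (fun i => w i * μs i x) (ξ x))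
    (i₀ : ι) (hdet : IsDeterministic (μs i₀))
    (l : Bool → Bool → ℝ) (hl : ∀ a y, l a y ∈ Set.Icc (0 : ℝ) 1)
    (hl00 : l false false = 0) (hl11 : l true true = 0)
    (Yμ Yξ : List Bool → Bool)
    (hYμ : IsPredictor (μs i₀) l Yμ) (hYξ : IsPredictor ξ l Yξ) :
    (∀ n : ℕ, totalLoss (μs i₀) l Yμ n = 0) ∧
    (∀ n : ℕ, totalLoss (μs i₀) l Yξ n ≤ 2 * totalEnt (μs i₀) ξ n ∧
      2 * totalEnt (μs i₀) ξ n ≤ 2 * Real.log (1 / w i₀)) := by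
  obtain ⟨a, ha⟩ := hdet
  set M := μs i₀ with hMdef
  -- value of μ on ofFn strings
  have hμ_ofFn : ∀ (t : ℕ) (f : Fin t → Bool),
      M (List.ofFn f) = if ∀ i, f i = a i then 1 else 0 := by
    intro t f
    rw [ha]
    apply if_congr _ rfl rfl
    constructor
    · intro h i
      have := h (Fin.cast (by simp) i)
      simpa [List.get_ofFn] using this
    · intro h i
      simp [List.get_ofFn, h]
  have hμ_pref : ∀ t, M (detPref a t) = 1 := by
    intro t; rw [detPref, hμ_ofFn]; simp
  have hpref_succ : ∀ t, detPref a (t + 1) = detPref a t ++ [a t] := by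
    intro t
    rw [detPref, detPref, ofFn_append_singleton]
    congr 1
    funext i
    refine Fin.lastCases ?_ ?_ i
    · simp
    · intro j; simp
  have hμ_ext : ∀ t b, M (detPref a t ++ [b]) = if b = a t then 1 else 0 := by
    intro t b
    rw [detPref, ofFn_append_singleton, hμ_ofFn]
    apply if_congr _ rfl rfl
    constructor
    · intro h
      simpa using h (Fin.last t)
    · intro h i
      refine Fin.lastCases ?_ ?_ i
      · simpa using h
      · intro j; simp
  -- reduction of inner sums
  have hreduce : ∀ (t : ℕ) (F : List Bool → ℝ),
      (∑ f : Fin t → Bool, M (List.ofFn f) * F (List.ofFn f)) = F (detPref a t) := by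
    intro t F
    rw [Finset.sum_eq_single (fun i : Fin t => a i)]
    · rw [hμ_ofFn]; simp [detPref]
    · intro g _ hg
      rw [hμ_ofFn, if_neg, zero_mul]
      intro hcon; exact hg (funext hcon)
    · simp
  -- ξ facts
  have hξ0 : ∀ x, 0 ≤ ξ x := fun x =>
    hasSum_le (fun i => mul_nonneg (hw i).le ((hμs i).1 x)) hasSum_zero (hξ x)
  have hξ_lb : ∀ x, w i₀ * M x ≤ ξ x := fun x =>
    le_hasSum (hξ x) i₀ (fun j _ => mul_nonneg (hw j).le ((hμs j).1 x))
  have hξ_add : ∀ x, ξ (x ++ [false]) + ξ (x ++ [true]) = ξ x := by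
    intro x
    refine HasSum.unique ?_ (hξ x)
    have h1 := (hξ (x ++ [false])).add (hξ (x ++ [true]))
    have he : (fun i => w i * μs i x)
        = fun i => w i * μs i (x ++ [false]) + w i * μs i (x ++ [true]) := by
      funext i; rw [(hμs i).2.2 x]; ring
    rw [he]; exact h1
  have hξ_nil : ξ [] = 1 := by
    refine HasSum.unique (hξ []) ?_
    have he : (fun i => w i * μs i []) = w := by
      funext i; rw [(hμs i).2.1, mul_one]
    rw [he]; exact hw1
  have hξ_pos : ∀ t, 0 < ξ (detPref a t) := by
    intro t
    have := hξ_lb (detPref a t)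
    rw [hμ_pref t, mul_one] at this
    exact lt_of_lt_of_le (hw i₀) this
  have hξ_mono : ∀ t, ξ (detPref a (t + 1)) ≤ ξ (detPref a t) := by
    intro t
    rw [hpref_succ]
    have h2 := hξ0 (detPref a t ++ [true])
    have h3 := hξ0 (detPref a t ++ [false])
    have h4 := hξ_add (detPref a t)
    rcases Bool.eq_false_or_eq_true (a t) with h | h <;> rw [h] <;> linarith
  -- the conditional probability of the true next bit under ξ
  set q : ℕ → ℝ := fun t => ξ (detPref a (t + 1)) / ξ (detPref a t) with hqdef
  have hq0 : ∀ t, 0 < q t := fun t => div_pos (hξ_pos (t + 1)) (hξ_pos t)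
  have hq1 : ∀ t, q t ≤ 1 := fun t => div_le_one_of_le₀ (hξ_mono t) (hξ_pos t).le
  -- conditional probabilities
  have hcondμ : ∀ t b, condP M (detPref a t) b = if b = a t then 1 else 0 := by
    intro t b
    rw [condP, hμ_pref, hμ_ext, div_one]
  have hcondξ : ∀ t, condP ξ (detPref a t) (a t) = q t := by
    intro t
    rw [condP, hqdef]
    simp only [← hpref_succ t]
  have hcondξ' : ∀ t, condP ξ (detPref a t) (!a t) = 1 - q t := by
    intro t
    have hA := (hξ_pos t).ne'
    have hadd := hξ_add (detPref a t)
    rw [condP, hqdef]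
    rcases Bool.eq_false_or_eq_true (a t) with h | h <;> rw [h] <;>
      simp only [Bool.not_false, Bool.not_true] <;>
      rw [hpref_succ t, h] <;> field_simp <;> linarith
  -- expected loss under M
  have hexpM : ∀ t y, expLoss M l (detPref a t) y = l (a t) y := by
    intro t y
    rw [expLoss, Fintype.sum_bool, hcondμ, hcondμ]
    rcases Bool.eq_false_or_eq_true (a t) with h | h <;> rw [h] <;> simp
  -- instantaneous entropy at the prefix
  have hinst : ∀ t, instEnt M ξ (detPref a t) = -Real.log (q t) := by
    intro t
    have hc1 := hcondξ t
    rw [instEnt, Fintype.sum_bool, hcondμ, hcondμ]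
    rcases Bool.eq_false_or_eq_true (a t) with h | h <;> rw [h] at hc1 ⊢ <;>
      simp [hc1, one_div, Real.log_inv]  -- reductions of total quantities
  have hTL : ∀ (Y : List Bool → Bool) (n : ℕ),
      totalLoss M l Y n = ∑ t ∈ Finset.range n, l (a t) (Y (detPref a t)) := by
    intro Y n
    rw [totalLoss]
    refine Finset.sum_congr rfl fun t _ => ?_
    calc (∑ x : Fin t → Bool, M (List.ofFn x) * expLoss M l (List.ofFn x) (Y (List.ofFn x)))
        = (fun z => expLoss M l z (Y z)) (detPref a t) := hreduce t (fun z => expLoss M l z (Y z))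
      _ = l (a t) (Y (detPref a t)) := hexpM t _
  have hTE : ∀ n, totalEnt M ξ n = ∑ t ∈ Finset.range n, -Real.log (q t) := by
    intro n
    rw [totalEnt]
    exact Finset.sum_congr rfl fun t _ => (hreduce t (instEnt M ξ)).trans (hinst t)
  have hTE' : ∀ n, totalEnt M ξ n = -Real.log (ξ (detPref a n)) := by
    intro n
    have hterm : ∀ t, -Real.log (q t)
        = Real.log (ξ (detPref a t)) - Real.log (ξ (detPref a (t + 1))) := by
      intro t
      rw [hqdef]
      show -Real.log (ξ (detPref a (t + 1)) / ξ (detPref a t)) = _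
      rw [Real.log_div (hξ_pos (t + 1)).ne' (hξ_pos t).ne']
      ring
    rw [hTE n]
    rw [Finset.sum_congr rfl fun t _ => hterm t, Finset.sum_range_sub' (fun t => Real.log (ξ (detPref a t))) n]
    have h0 : detPref a 0 = [] := by simp [detPref]
    rw [h0, hξ_nil, Real.log_one]
    ring
  have h00 : ∀ t, l (a t) (a t) = 0 := by
    intro t
    rcases Bool.eq_false_or_eq_true (a t) with h | h <;> rw [h] <;> assumption
  refine ⟨?_, ?_⟩
  · intro n
    rw [hTL]
    refine Finset.sum_eq_zero fun t _ => ?_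
    have h1 := hYμ (detPref a t) (a t)
    rw [hexpM, hexpM, h00 t] at h1
    exact le_antisymm h1 (hl _ _).1
  · intro n
    constructor
    · rw [hTL, hTE, Finset.mul_sum]
      refine Finset.sum_le_sum fun t _ => ?_
      by_cases hy : Yξ (detPref a t) = a t
      · rw [hy, h00 t]
        have := Real.log_nonpos (hq0 t).le (hq1 t)
        linarith
      · have hy' : Yξ (detPref a t) = !a t := by
          revert hy
          rcases Bool.eq_false_or_eq_true (Yξ (detPref a t)) with h | h <;>
            rcases Bool.eq_false_or_eq_true (a t) with h' | h' <;> rw [h, h'] <;> simp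
        have h1 := hYξ (detPref a t) (a t)
        rw [hy'] at h1
        rw [hy']
        rw [expLoss, expLoss, Fintype.sum_bool, Fintype.sum_bool] at h1
        have hc1 := hcondξ t
        have hc2 := hcondξ' t
        have hle1 := (hl (!a t) (a t)).2
        have hge0 := (hl (!a t) (a t)).1
        have h1q : 0 ≤ 1 - q t := by linarith [hq1 t]
        have key : q t * l (a t) (!a t) ≤ 1 - q t := by
          rcases Bool.eq_false_or_eq_true (a t) with h | h <;>
            rw [h] at h1 hc1 hc2 hle1 hge0 ⊢ <;>
            simp only [Bool.not_false, Bool.not_true] at h1 hc1 hc2 hle1 hge0 ⊢ <;>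
            rw [hc1, hc2] at h1 <;> rw [hl00, hl11] at h1 <;> nlinarith
        have := aux_key (q t) (l (a t) (!a t)) (hq0 t) (hq1 t) (hl _ _).1 (hl _ _).2 key
        linarith
    · rw [hTE' n]
      have hlb := hξ_lb (detPref a n)
      rw [hμ_pref, mul_one] at hlb
      have hlog := Real.log_le_log (hw i₀) hlb
      rw [one_div, Real.log_inv]
      linarith
end

section
/- Linear loss bound: for all real A > 0 and B ≥ A/4 + 1/A and all n ≥ 1, L_{nΛξ} ≤ (A+1) L_{nΛμ} + (B+1) H_n. -/
open Finset Filter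

/-! Fix a history with `μ x > 0` and write `y = μ(1|x)`, `z = ξ(1|x)`, `H = KL(y‖z)` and
`l_μ ≤ l_ξ` for the `μ`-expected losses of the two predictions. It suffices to show
`(l_ξ - l_μ)² ≤ 2H(l_μ + l_ξ)`: completing a square turns this into
`l_ξ - l_μ ≤ A l_μ + (A/4 + 1/A + 1) H`, and summing over histories gives the theorem.
By the symmetry `0 ↔ 1` take `z < y`, and let `a` be the loss difference of the two predictions
on outcome `1`. Optimality of the `ξ`-prediction under `ξ` gives `(l_ξ - l_μ)(1 - z) ≤ a (y - z)`,
and a weighted Pinsker inequality bounds `a (y - z)²` by `H` times a multiple of `1 - z`. -/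

open Real

noncomputable def bernKL (y z : ℝ) : ℝ :=
  y * log (y / z) + (1 - y) * log ((1 - y) / (1 - z))

lemma bernKL_one_sub (y z : ℝ) : bernKL (1 - y) (1 - z) = bernKL y z := by
  simp only [bernKL, sub_sub_cancel]
  ring

@[simp]
lemma bernKL_self (y : ℝ) : bernKL y y = 0 := by
  rcases eq_or_ne y 0 with rfl | hy0
  · simp [bernKL]
  rcases eq_or_ne (1 - y) 0 with hy1 | hy1
  · simp [bernKL, hy1]
  simp [bernKL, div_self hy0, div_self hy1]

lemma mul_log_div_of_ne_zero (y : ℝ) {t : ℝ} (ht : t ≠ 0) :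
    y * log (y / t) = y * (log y - log t) := by
  rcases eq_or_ne y 0 with rfl | hy
  · simp
  · rw [log_div hy ht]

lemma hasDerivAt_bernKL_right (y : ℝ) {t : ℝ} (ht0 : 0 < t) (ht1 : t < 1) :
    HasDerivAt (bernKL y) ((t - y) / (t * (1 - t))) t := by
  have ht1' : 1 - t ≠ 0 := by linarith
  have hlog := ((hasDerivAt_const t (log y)).sub (hasDerivAt_log ht0.ne')).const_mul y
  have hlog1 := ((hasDerivAt_const t (log (1 - y))).sub
    (((hasDerivAt_id' t).const_sub 1).log ht1')).const_mul (1 - y)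
  have heq : (fun s => y * (log y - log s) + (1 - y) * (log (1 - y) - log (1 - s)))
      =ᶠ[nhds t] bernKL y := by
    filter_upwards [Ioo_mem_nhds ht0 ht1] with s hs
    have : 1 - s ≠ 0 := by linarith [hs.2]
    rw [bernKL, mul_log_div_of_ne_zero y hs.1.ne', mul_log_div_of_ne_zero (1 - y) this]
  refine ((hlog.add hlog1).congr_of_eventuallyEq heq.symm).congr_deriv ?_
  field_simp
  ring

lemma continuousOn_bernKL_right {y z : ℝ} (hz : 0 < z) (hy : y ≤ 1) :
    ContinuousOn (bernKL y) (Set.Icc z y) := by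
  rcases hy.lt_or_eq with hy | rfl
  · exact fun t ht => (hasDerivAt_bernKL_right y (hz.trans_le ht.1)
      (ht.2.trans_lt hy)).continuousAt.continuousWithinAt
  · have : bernKL 1 = fun t => -log t := funext fun t => by simp [bernKL, log_inv]
    rw [this]
    exact (continuousOn_log.mono fun t ht => (hz.trans_le ht.1).ne').neg

/-- A weighted Pinsker inequality: since `∂ₜ bernKL y t = (t - y) / (t (1 - t))`, the bound
`c t (1 - t) ≤ C` makes `2C bernKL y t - c (y - t)²` decrease on `[z, y]`, where it ends at `0`. -/
lemma mul_sq_sub_le_bernKL {c C y z : ℝ} (hz : 0 < z) (hzy : z ≤ y) (hy : y ≤ 1)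
    (hc : ∀ t ∈ Set.Ioo z y, c * (t * (1 - t)) ≤ C) :
    c * (y - z) ^ 2 ≤ 2 * C * bernKL y z := by
  have hanti : AntitoneOn (fun t => 2 * C * bernKL y t - c * (y - t) ^ 2) (Set.Icc z y) := by
    refine antitoneOn_of_hasDerivWithinAt_nonpos (convex_Icc z y)
      (((continuousOn_bernKL_right hz hy).const_smul (2 * C)).sub (by fun_prop))
      (f' := fun t => 2 * (y - t) * (c * (t * (1 - t)) - C) / (t * (1 - t))) ?_ ?_
    · rw [interior_Icc]
      intro t ht
      have ht0 : 0 < t := hz.trans ht.1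
      have ht1 : 1 - t ≠ 0 := by linarith [ht.2]
      refine HasDerivAt.hasDerivWithinAt ?_
      refine (((hasDerivAt_bernKL_right y ht0 (ht.2.trans_le hy)).const_mul (2 * C)).sub
        ((((hasDerivAt_id' t).const_sub y).pow 2).const_mul c)).congr_deriv ?_
      field_simp
      ring
    · rw [interior_Icc]
      intro t ht
      have ht0 : 0 < t := hz.trans ht.1
      have ht1 : 0 < 1 - t := by linarith [ht.2]
      exact div_nonpos_of_nonpos_of_nonneg
        (mul_nonpos_of_nonneg_of_nonpos (by linarith [ht.2]) (by linarith [hc t ht]))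
        (by positivity)
  have := hanti (Set.left_mem_Icc.2 hzy) (Set.right_mem_Icc.2 hzy) hzy
  norm_num at this
  linarith

lemma bernKL_nonneg {y z : ℝ} (hy0 : 0 ≤ y) (hy1 : y ≤ 1) (hz0 : 0 < z) (hz1 : z < 1) :
    0 ≤ bernKL y z := by
  rcases le_total z y with hzy | hyz
  · simpa using mul_sq_sub_le_bernKL (c := 0) (C := 1) hz0 hzy hy1 (by simp)
  · rw [← bernKL_one_sub]
    simpa using mul_sq_sub_le_bernKL (c := 0) (C := 1) (sub_pos.2 hz1) (by linarith)
      (by linarith) (by simp)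

noncomputable def bernMean (p : ℝ) (f : Bool → ℝ) : ℝ :=
  p * f true + (1 - p) * f false

lemma bernMean_one_sub (p : ℝ) (f : Bool → ℝ) :
    bernMean (1 - p) (fun b => f !b) = bernMean p f := by
  simp only [bernMean, Bool.not_true, Bool.not_false, sub_sub_cancel]
  ring

lemma bernMean_nonneg {p : ℝ} {f : Bool → ℝ} (hp0 : 0 ≤ p) (hp1 : p ≤ 1) (hf : ∀ b, 0 ≤ f b) :
    0 ≤ bernMean p f :=
  add_nonneg (mul_nonneg hp0 (hf true)) (mul_nonneg (sub_nonneg.2 hp1) (hf false))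

lemma mul_mul_one_sub_le {a t y z : ℝ} (hz : 0 ≤ z) (hzt : z ≤ t) (hty : t ≤ y) (hy : y ≤ 1)
    (ha0 : 0 ≤ a) (ha1 : a ≤ 1) (haz : a * z ≤ 1 - z) :
    a * (t * (1 - t)) ≤ (1 - z) * (y + z - 2 * y * z) := by
  rcases le_total z (1 / 2) with hz2 | hz2
  · -- `(1 - z) (z + t (1 - 2z)) - t (1 - t) = (t - z)² + z (1 - 2z) (1 - t)`
    have h1 : a * (t * (1 - t)) ≤ t * (1 - t) :=
      mul_le_of_le_one_left (by nlinarith) ha1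
    nlinarith [sq_nonneg (t - z), mul_nonneg (mul_nonneg hz (by linarith : 0 ≤ 1 - 2 * z))
      (by linarith : 0 ≤ 1 - t), mul_nonneg (by linarith : 0 ≤ 1 - z)
      (mul_nonneg (by linarith : 0 ≤ y - t) (by linarith : 0 ≤ 1 - 2 * z))]
  · have h1 : t * (1 - t) ≤ z * (1 - z) := by nlinarith
    have h2 : a * (z * (1 - z)) ≤ (1 - z) * (1 - z) := by nlinarith
    nlinarith [mul_nonneg (mul_nonneg (by linarith : 0 ≤ 2 * z - 1) (by linarith : 0 ≤ 1 - y))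
      (by linarith : 0 ≤ 1 - z)]

lemma sq_bernMean_sub_le_of_lt {y z : ℝ} {u v : Bool → ℝ} (hz : 0 < z) (hzy : z < y)
    (hy : y ≤ 1) (hu : ∀ b, u b ∈ Set.Icc 0 1) (hv : ∀ b, v b ∈ Set.Icc 0 1)
    (hμ : bernMean y u ≤ bernMean y v) (hξ : bernMean z v ≤ bernMean z u) :
    (bernMean y v - bernMean y u) ^ 2 ≤
      2 * bernKL y z * (bernMean y u + bernMean y v) := by
  set r := bernMean y v - bernMean y u
  set S := bernMean y u + bernMean y v
  set H := bernKL y z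
  set a := v true - u true
  set b := v false - u false
  have hz1 : 0 < 1 - z := by linarith
  have hr : r = y * a + (1 - y) * b := by simp only [r, a, b, bernMean]; ring
  have hξ' : z * a + (1 - z) * b ≤ 0 := by simp only [a, b, bernMean] at hξ ⊢; linarith
  have hH : 0 ≤ H := bernKL_nonneg (by linarith) hy hz (by linarith)
  have ha0 : 0 ≤ a := by nlinarith
  have ha1 : a ≤ 1 := by simp only [a]; linarith [(hu true).1, (hv true).2]
  have haz : a * z ≤ 1 - z := by
    simp only [b] at hξ'
    nlinarith [(hu false).2, (hv false).1]
  have hr_le : r * (1 - z) ≤ a * (y - z) := by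
    nlinarith [mul_nonneg (by linarith : 0 ≤ 1 - y) (neg_nonneg.2 hξ')]
  have hS : a * (y + z - 2 * y * z) ≤ S * (1 - z) := by
    have hza : z * a ≤ (1 - z) * u false := by
      simp only [b] at hξ'
      nlinarith [(hv false).1]
    have hy0 : 0 ≤ y := by linarith
    have hy1 : 0 ≤ 1 - y := by linarith
    have h1 : 0 ≤ (2 * y * u true + (1 - y) * v false) * (1 - z) :=
      mul_nonneg (by nlinarith [(hu true).1, (hv false).1]) hz1.le
    have h2 : 0 ≤ (1 - y) * ((1 - z) * u false - z * a) := mul_nonneg hy1 (by linarith)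
    simp only [S, a, bernMean]
    linear_combination h1 + h2
  have hkey : a * (y - z) ^ 2 ≤ 2 * ((1 - z) * (y + z - 2 * y * z)) * H :=
    mul_sq_sub_le_bernKL hz hzy.le hy fun t ht =>
      mul_mul_one_sub_le hz.le ht.1.le ht.2.le hy ha0 ha1 haz
  have hr0 : 0 ≤ r := sub_nonneg.2 hμ
  have : (r * (1 - z)) ^ 2 ≤ (2 * H * S) * (1 - z) ^ 2 :=
    calc (r * (1 - z)) ^ 2 ≤ (a * (y - z)) ^ 2 := pow_le_pow_left₀ (mul_nonneg hr0 hz1.le) hr_le 2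
      _ = a * (a * (y - z) ^ 2) := by ring
      _ ≤ a * (2 * ((1 - z) * (y + z - 2 * y * z)) * H) := mul_le_mul_of_nonneg_left hkey ha0
      _ = 2 * H * (1 - z) * (a * (y + z - 2 * y * z)) := by ring
      _ ≤ 2 * H * (1 - z) * (S * (1 - z)) := mul_le_mul_of_nonneg_left hS (by positivity)
      _ = (2 * H * S) * (1 - z) ^ 2 := by ring
  rw [mul_pow] at this
  exact le_of_mul_le_mul_right this (by positivity)

lemma sq_bernMean_sub_le {y z : ℝ} {u v : Bool → ℝ} (hy0 : 0 ≤ y) (hy1 : y ≤ 1)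
    (hz0 : 0 < z) (hz1 : z < 1) (hu : ∀ b, u b ∈ Set.Icc 0 1) (hv : ∀ b, v b ∈ Set.Icc 0 1)
    (hμ : bernMean y u ≤ bernMean y v) (hξ : bernMean z v ≤ bernMean z u) :
    (bernMean y v - bernMean y u) ^ 2 ≤
      2 * bernKL y z * (bernMean y u + bernMean y v) := by
  rcases lt_trichotomy z y with hzy | rfl | hyz
  · exact sq_bernMean_sub_le_of_lt hz0 hzy hy1 hu hv hμ hξ
  · simp [le_antisymm hμ hξ]
  · have := sq_bernMean_sub_le_of_lt (u := fun b => u !b) (v := fun b => v !b) (sub_pos.2 hz1)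
      (sub_lt_sub_left hyz 1) (by linarith) (fun b => hu _) (fun b => hv _)
      (by rwa [bernMean_one_sub, bernMean_one_sub]) (by rwa [bernMean_one_sub, bernMean_one_sub])
    simpa only [bernMean_one_sub, bernKL_one_sub] using this

/-- The hypothesis says `(r - H)² ≤ H² + 4Hl`, and
`(Al + (A/4 + 1/A)H)² = H² + 4Hl + (Al + (A/4 - 1/A)H)²`. -/
lemma le_of_sq_le_two_mul {A H l r : ℝ} (hA : 0 < A) (hl : 0 ≤ l) (hH : 0 ≤ H)
    (h : r ^ 2 ≤ 2 * H * (2 * l + r)) : r ≤ A * l + (A / 4 + 1 / A + 1) * H := by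
  have hsq : (A * l + (A / 4 + 1 / A) * H) ^ 2 =
      H ^ 2 + 4 * H * l + (A * l + (A / 4 - 1 / A) * H) ^ 2 := by
    field_simp
    ring
  have : r - H ≤ A * l + (A / 4 + 1 / A) * H :=
    le_of_sq_le_sq (by nlinarith [sq_nonneg (A * l + (A / 4 - 1 / A) * H)]) (by positivity)
  linarith

lemma bernMean_le_mul_bernMean_add_mul_bernKL {A B y z : ℝ} {u v : Bool → ℝ} (hA : 0 < A)
    (hB : A / 4 + 1 / A ≤ B)
    (hy0 : 0 ≤ y) (hy1 : y ≤ 1) (hz0 : 0 ≤ z) (hz1 : z ≤ 1)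
    (hdom0 : 0 < y → 0 < z) (hdom1 : y < 1 → z < 1)
    (hu : ∀ b, u b ∈ Set.Icc 0 1) (hv : ∀ b, v b ∈ Set.Icc 0 1)
    (hμ : bernMean y u ≤ bernMean y v) (hξ : bernMean z v ≤ bernMean z u) :
    bernMean y v ≤ (A + 1) * bernMean y u + (B + 1) * bernKL y z := by
  have hl : 0 ≤ bernMean y u := bernMean_nonneg hy0 hy1 fun b => (hu b).1
  rcases eq_or_ne y z with rfl | hyz
  · simp only [bernKL_self, mul_zero, add_zero]
    nlinarith [mul_nonneg hA.le hl]
  have hz0 : 0 < z := by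
    by_contra! hz
    have : y ≤ 0 := not_lt.1 (mt hdom0 hz.not_gt)
    exact hyz (by linarith)
  have hz1 : z < 1 := by
    by_contra! hz
    have : 1 ≤ y := not_lt.1 (mt hdom1 hz.not_gt)
    exact hyz (by linarith)
  have hH := bernKL_nonneg hy0 hy1 hz0 hz1
  have hr := le_of_sq_le_two_mul hA hl hH (r := bernMean y v - bernMean y u) (by
    have := sq_bernMean_sub_le hy0 hy1 hz0 hz1 hu hv hμ hξ
    linarith)
  linarith [mul_le_mul_of_nonneg_right hB hH]

section History

variable {ρ μ ξ : List Bool → ℝ} {x : List Bool}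

lemma condP_false_eq (hadd : ρ x = ρ (x ++ [false]) + ρ (x ++ [true])) (hx : ρ x ≠ 0) :
    condP ρ x false = 1 - condP ρ x true := by
  rw [eq_sub_iff_add_eq, condP, condP, ← add_div, ← hadd, div_self hx]

lemma condP_true_mem_Icc (h0 : ∀ x, 0 ≤ ρ x) (hadd : ρ x = ρ (x ++ [false]) + ρ (x ++ [true]))
    (hx : 0 < ρ x) : condP ρ x true ∈ Set.Icc 0 1 :=
  ⟨div_nonneg (h0 _) hx.le, (div_le_one hx).2 (by linarith [h0 (x ++ [false])])⟩

lemma expLoss_eq_bernMean (l : Bool → Bool → ℝ) (c : Bool)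
    (hadd : ρ x = ρ (x ++ [false]) + ρ (x ++ [true])) (hx : ρ x ≠ 0) :
    expLoss ρ l x c = bernMean (condP ρ x true) (fun b => l b c) := by
  rw [expLoss, Fintype.sum_bool, condP_false_eq hadd hx, bernMean]

lemma instEnt_eq_bernKL (hμadd : μ x = μ (x ++ [false]) + μ (x ++ [true])) (hμx : μ x ≠ 0)
    (hξadd : ξ x = ξ (x ++ [false]) + ξ (x ++ [true])) (hξx : ξ x ≠ 0) :
    instEnt μ ξ x = bernKL (condP μ x true) (condP ξ x true) := by
  rw [instEnt, Fintype.sum_bool, condP_false_eq hμadd hμx, condP_false_eq hξadd hξx, bernKL]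

lemma condP_pos_of_le_mul {c : ℝ} (hc : 0 < c) (hμ0 : ∀ x, 0 ≤ μ x)
    (hdom : ∀ x, c * μ x ≤ ξ x) (hξx : 0 < ξ x) {b : Bool} (h : 0 < condP μ x b) :
    0 < condP ξ x b := by
  have : 0 < μ (x ++ [b]) := by
    rcases (hμ0 (x ++ [b])).eq_or_lt with h' | h'
    · simp [condP, ← h'] at h
    · exact h'
  exact div_pos ((mul_pos hc this).trans_le (hdom _)) hξx

end History

section Prediction

variable {μ ξ : List Bool → ℝ} {l : Bool → Bool → ℝ} {Yμ Yξ : List Bool → Bool}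

lemma expLoss_le_of_isPredictor {A B c : ℝ} (hμ0 : ∀ x, 0 ≤ μ x)
    (hμadd : ∀ x, μ x = μ (x ++ [false]) + μ (x ++ [true])) (hξ0 : ∀ x, 0 ≤ ξ x)
    (hξadd : ∀ x, ξ x = ξ (x ++ [false]) + ξ (x ++ [true])) (hc : 0 < c)
    (hdom : ∀ x, c * μ x ≤ ξ x) (hl : ∀ a y, l a y ∈ Set.Icc (0 : ℝ) 1)
    (hYμ : IsPredictor μ l Yμ) (hYξ : IsPredictor ξ l Yξ)
    (hA : 0 < A) (hB : A / 4 + 1 / A ≤ B) {x : List Bool} (hx : 0 < μ x) :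
    expLoss μ l x (Yξ x) ≤ (A + 1) * expLoss μ l x (Yμ x) + (B + 1) * instEnt μ ξ x := by
  have hξx : 0 < ξ x := (mul_pos hc hx).trans_le (hdom x)
  have hμ_eq := fun c => expLoss_eq_bernMean l c (hμadd x) hx.ne'
  have hξ_eq := fun c => expLoss_eq_bernMean l c (hξadd x) hξx.ne'
  have hy := condP_true_mem_Icc hμ0 (hμadd x) hx
  have hz := condP_true_mem_Icc hξ0 (hξadd x) hξx
  have hpos := fun b => condP_pos_of_le_mul (x := x) hc hμ0 hdom hξx (b := b)
  have hμ_opt := hYμ x (Yξ x)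
  have hξ_opt := hYξ x (Yμ x)
  rw [hμ_eq, hμ_eq] at hμ_opt ⊢
  rw [hξ_eq, hξ_eq] at hξ_opt
  rw [instEnt_eq_bernKL (hμadd x) hx.ne' (hξadd x) hξx.ne']
  refine bernMean_le_mul_bernMean_add_mul_bernKL hA hB hy.1 hy.2 hz.1 hz.2 (hpos true)
    (fun h => ?_) (fun b => hl b _) (fun b => hl b _) hμ_opt hξ_opt
  have := hpos false
  rw [condP_false_eq (hμadd x) hx.ne', condP_false_eq (hξadd x) hξx.ne'] at this
  linarith [this (by linarith)]

lemma totalLoss_le_of_forall {Y Y' : List Bool → Bool} {a b : ℝ} (hμ0 : ∀ x, 0 ≤ μ x)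
    (h : ∀ x, 0 < μ x →
      expLoss μ l x (Y x) ≤ a * expLoss μ l x (Y' x) + b * instEnt μ ξ x) (n : ℕ) :
    totalLoss μ l Y n ≤ a * totalLoss μ l Y' n + b * totalEnt μ ξ n := by
  simp only [totalLoss, totalEnt, Finset.mul_sum, ← Finset.sum_add_distrib]
  gcongr with t _ x
  rcases (hμ0 (List.ofFn x)).eq_or_lt with h0 | hpos
  · simp [← h0]
  · calc _ ≤ μ (List.ofFn x) * (a * expLoss μ l (List.ofFn x) (Y' (List.ofFn x)) +
          b * instEnt μ ξ (List.ofFn x)) := mul_le_mul_of_nonneg_left (h _ hpos) hpos.le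
      _ = _ := by ring

end Prediction

lemma mixture_additive {ι : Type*} {μs : ι → List Bool → ℝ} {w : ι → ℝ}
    {ξ : List Bool → ℝ} (hμs : ∀ i x, μs i x = μs i (x ++ [false]) + μs i (x ++ [true]))
    (hξ : ∀ x, HasSum (fun i => w i * μs i x) (ξ x)) (x : List Bool) :
    ξ x = ξ (x ++ [false]) + ξ (x ++ [true]) :=
  (hξ x).unique <| by
    simpa only [← mul_add, ← hμs _ x] using (hξ (x ++ [false])).add (hξ (x ++ [true]))

theorem linear_loss_bound_general {ι : Type*}
    (μs : ι → List Bool → ℝ) (w : ι → ℝ)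
    (hμs : ∀ i, IsDistr (μs i)) (hw : ∀ i, 0 < w i)
    (ξ : List Bool → ℝ) (hξ : ∀ x, HasSum (fun i => w i * μs i x) (ξ x))
    (i₀ : ι)
    (l : Bool → Bool → ℝ) (hl : ∀ a y, l a y ∈ Set.Icc (0 : ℝ) 1)
    (Yμ Yξ : List Bool → Bool)
    (hYμ : IsPredictor (μs i₀) l Yμ) (hYξ : IsPredictor ξ l Yξ)
    (A B : ℝ) (hA : 0 < A) (hB : A / 4 + 1 / A ≤ B)
    (n : ℕ) :
    totalLoss (μs i₀) l Yξ n ≤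
      (A + 1) * totalLoss (μs i₀) l Yμ n + (B + 1) * totalEnt (μs i₀) ξ n := by
  have hterm : ∀ i x, 0 ≤ w i * μs i x := fun i x => mul_nonneg (hw i).le ((hμs i).1 x)
  have hξ0 : ∀ x, 0 ≤ ξ x := fun x => (hξ x).nonneg (hterm · x)
  have hdom : ∀ x, w i₀ * μs i₀ x ≤ ξ x := fun x => le_hasSum (hξ x) i₀ fun i _ => hterm i x
  exact totalLoss_le_of_forall (hμs i₀).1 (fun _ hx => expLoss_le_of_isPredictor (hμs i₀).1
    (hμs i₀).2.2 hξ0 (mixture_additive (fun i => (hμs i).2.2) hξ) (hw i₀) hdom hl hYμ hYξ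
    hA hB hx) n

/-- linear loss bound, eq. (9): for all `A > 0`,
`B ≥ A/4 + 1/A` and `n ≥ 1`, `L_{nΛξ} ≤ (A+1) L_{nΛμ} + (B+1) H_n`. -/
theorem linear_loss_bound {ι : Type*} [Countable ι]
    (μs : ι → List Bool → ℝ) (w : ι → ℝ)
    (hμs : ∀ i, IsDistr (μs i)) (hw : ∀ i, 0 < w i) (hw1 : HasSum w 1)
    (ξ : List Bool → ℝ) (hξ : ∀ x, HasSum (fun i => w i * μs i x) (ξ x))
    (i₀ : ι)
    (l : Bool → Bool → ℝ) (hl : ∀ a y, l a y ∈ Set.Icc (0 : ℝ) 1)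
    (Yμ Yξ : List Bool → Bool)
    (hYμ : IsPredictor (μs i₀) l Yμ) (hYξ : IsPredictor ξ l Yξ)
    (A B : ℝ) (hA : 0 < A) (hB : A / 4 + 1 / A ≤ B)
    (n : ℕ) (hn : 1 ≤ n) :
    totalLoss (μs i₀) l Yξ n ≤
      (A + 1) * totalLoss (μs i₀) l Yμ n + (B + 1) * totalEnt (μs i₀) ξ n :=
  linear_loss_bound_general μs w hμs hw ξ hξ i₀ l hl Yμ Yξ hYμ hYξ A B hA hB n
end

section
/- Core entropy–loss inequality: let A > 0, B ≥ A/4 + 1/A, A' = A + 1, B' = B + 1. Then for all a, b, c, y ∈ [0,1] and z ∈ (0,1) with z·b ≤ (1−z)·a, one has B'·(y ln(y/z) + (1−y) ln((1−y)/(1−z))) + A'(1−y)a − y·b + A·c ≥ 0, with the convention 0·ln 0 = 0. -/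
/-!
By the Gibbs (Donsker–Varadhan) variational inequality, `y t + (1 - y) u ≤ KL(y ‖ z)` whenever
`z eᵗ + (1 - z) eᵘ ≤ 1`; take `t = b / B'` and `u = -A' a / B'`. Convexity of `exp` and the
constraint `z b ≤ (1 - z) a` reduce this side condition to `e^β + e^(-A'β) ≤ 2` for `β = 1 / B'`.
After multiplying by `e^(-Aβ/2)` this reads `cosh ((A + 2) β / 2) ≤ e^(Aβ/2)`, which follows from
`cosh x ≤ exp (x² / 2)` because `B' ≥ (A + 2)² / (4 A)`.
-/

open Finset Filter

open Real

noncomputable def binKL (y z : ℝ) : ℝ :=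
  y * log (y / z) + (1 - y) * log ((1 - y) / (1 - z))

lemma sub_le_mul_log_div {x y : ℝ} (hx : 0 < x) (hy : 0 ≤ y) : y - x ≤ y * log (y / x) := by
  rcases hy.eq_or_lt with rfl | hy
  · simpa using hx.le
  · have h := one_sub_inv_le_log_of_pos (div_pos hy hx)
    rw [inv_div] at h
    calc y - x = y * (1 - x / y) := by field_simp
      _ ≤ y * log (y / x) := by gcongr

lemma mul_log_div_mul (y : ℝ) {x w : ℝ} (hx : x ≠ 0) (hw : w ≠ 0) :
    y * log (y / (x * w)) = y * log (y / x) - y * log w := by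
  rcases eq_or_ne y 0 with rfl | hy
  · simp
  · rw [← div_div, log_div (div_ne_zero hy hx) hw]
    ring

lemma mul_add_mul_sub_log_le_binKL {y z : ℝ} (t u : ℝ) (hy0 : 0 ≤ y) (hy1 : y ≤ 1)
    (hz0 : 0 < z) (hz1 : z < 1) :
    y * t + (1 - y) * u - log (z * exp t + (1 - z) * exp u) ≤ binKL y z := by
  set S := z * exp t + (1 - z) * exp u
  have hz1' : 0 < 1 - z := sub_pos.2 hz1
  have hS : 0 < S := by positivity
  -- Gibbs' inequality against the tilted distribution `(z eᵗ, (1 - z) eᵘ) / S`.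
  have hp := sub_le_mul_log_div (x := z * (exp t / S)) (by positivity) hy0
  have hq := sub_le_mul_log_div (x := (1 - z) * (exp u / S)) (by positivity) (sub_nonneg.2 hy1)
  rw [mul_log_div_mul _ hz0.ne' (by positivity), log_div (exp_pos t).ne' hS.ne', log_exp] at hp
  rw [mul_log_div_mul _ hz1'.ne' (by positivity), log_div (exp_pos u).ne' hS.ne', log_exp] at hq
  have hpq : z * (exp t / S) + (1 - z) * (exp u / S) = 1 := by
    field_simp
    rfl
  unfold binKL
  nlinarith

lemma exp_add_exp_neg_le_two {s t : ℝ} (h : (s + t) ^ 2 ≤ 4 * (t - s)) :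
    exp s + exp (-t) ≤ 2 := by
  have hs : exp s = exp ((s - t) / 2) * exp ((s + t) / 2) := by rw [← exp_add]; ring_nf
  have ht : exp (-t) = exp ((s - t) / 2) * exp (-((s + t) / 2)) := by rw [← exp_add]; ring_nf
  calc exp s + exp (-t) = 2 * exp ((s - t) / 2) * cosh ((s + t) / 2) := by
        rw [cosh_eq, hs, ht]; ring
    _ ≤ 2 * exp ((s - t) / 2) * exp (((s + t) / 2) ^ 2 / 2) := by
        gcongr; exact cosh_le_exp_half_sq _
    _ ≤ 2 * exp ((s - t) / 2) * exp ((t - s) / 2) := by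
        gcongr; nlinarith
    _ = 2 := by
        rw [mul_assoc, ← exp_add, add_comm, ← add_div, sub_add_sub_cancel, sub_self, zero_div,
          exp_zero, mul_one]

lemma exp_mul_le_mul_exp_add_one_sub {a : ℝ} (s : ℝ) (ha0 : 0 ≤ a) (ha1 : a ≤ 1) :
    exp (a * s) ≤ a * exp s + (1 - a) := by
  simpa using convexOn_exp.2 (Set.mem_univ s) (Set.mem_univ 0) ha0 (sub_nonneg.2 ha1)
    (add_sub_cancel a 1)

lemma mul_exp_mul_add_mul_exp_neg_mul_le_one {a b z s t : ℝ} (ha0 : 0 ≤ a) (ha1 : a ≤ 1)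
    (hb0 : 0 ≤ b) (hb1 : b ≤ 1) (hz0 : 0 ≤ z) (hz1 : z ≤ 1) (hzb : z * b ≤ (1 - z) * a)
    (hs : 0 ≤ s) (hst : exp s + exp (-t) ≤ 2) :
    z * exp (b * s) + (1 - z) * exp (-(a * t)) ≤ 1 := by
  have hb := exp_mul_le_mul_exp_add_one_sub s hb0 hb1
  have ha := exp_mul_le_mul_exp_add_one_sub (-t) ha0 ha1
  rw [mul_neg] at ha
  have hes : 0 ≤ exp s - 1 := sub_nonneg.2 (one_le_exp hs)
  calc z * exp (b * s) + (1 - z) * exp (-(a * t))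
      ≤ z * (b * exp s + (1 - b)) + (1 - z) * (a * exp (-t) + (1 - a)) := by gcongr
    _ = 1 + z * b * (exp s - 1) - (1 - z) * a * (1 - exp (-t)) := by ring
    _ ≤ 1 + (1 - z) * a * (exp s - 1) - (1 - z) * a * (1 - exp (-t)) := by gcongr
    _ = 1 + (1 - z) * a * (exp s + exp (-t) - 2) := by ring
    _ ≤ 1 := by
        have : 0 ≤ (1 - z) * a := mul_nonneg (sub_nonneg.2 hz1) ha0
        nlinarith

/-- core entropy–loss inequality, eq. (13) of Section 3:
with `A' = A+1`, `B' = B+1`, for all `a,b,c,y ∈ [0,1]`, `z ∈ (0,1)` with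
`z·b ≤ (1−z)·a`, one has
`B'(y ln(y/z) + (1−y) ln((1−y)/(1−z))) + A'(1−y)a − yb + Ac ≥ 0`
(the conventions `0·ln 0 = 0` hold automatically since `Real.log 0 = 0`). -/
theorem core_entropy_loss_inequality
    (A B : ℝ) (hA : 0 < A) (hB : A / 4 + 1 / A ≤ B)
    (a b c y z : ℝ)
    (ha : a ∈ Set.Icc (0 : ℝ) 1) (hb : b ∈ Set.Icc (0 : ℝ) 1)
    (hc : c ∈ Set.Icc (0 : ℝ) 1) (hy : y ∈ Set.Icc (0 : ℝ) 1)
    (hz : z ∈ Set.Ioo (0 : ℝ) 1) (hzb : z * b ≤ (1 - z) * a) :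
    0 ≤ (B + 1) * (y * Real.log (y / z) + (1 - y) * Real.log ((1 - y) / (1 - z)))
        + (A + 1) * (1 - y) * a - y * b + A * c := by
  obtain ⟨ha0, ha1⟩ := ha
  obtain ⟨hb0, hb1⟩ := hb
  obtain ⟨hy0, hy1⟩ := hy
  obtain ⟨hz0, hz1⟩ := hz
  have hB1 : 0 < B + 1 := by
    have h : 0 < A / 4 + 1 / A := by positivity
    linarith
  have hβ : 0 ≤ 1 / (B + 1) := by positivity
  have hcond : (1 / (B + 1) + (A + 1) / (B + 1)) ^ 2 ≤ 4 * ((A + 1) / (B + 1) - 1 / (B + 1)) := by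
    have hAB : 4 + A ^ 2 ≤ 4 * A * B := by
      have h := mul_le_mul_of_nonneg_left hB (by positivity : 0 ≤ 4 * A)
      field_simp at h
      linarith
    rw [← add_div, ← sub_div, div_pow, div_le_iff₀ (by positivity)]
    field_simp
    nlinarith
  have hS := mul_exp_mul_add_mul_exp_neg_mul_le_one ha0 ha1 hb0 hb1 hz0.le hz1.le hzb hβ
    (exp_add_exp_neg_le_two hcond)
  have hDV := mul_add_mul_sub_log_le_binKL (b * (1 / (B + 1))) (-(a * ((A + 1) / (B + 1))))
    hy0 hy1 hz0 hz1
  have hlog := log_nonpos (by positivity) hS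
  have hKL : y * b - (A + 1) * (1 - y) * a ≤ (B + 1) * binKL y z := by
    have hscale : (B + 1) * (y * (b * (1 / (B + 1))) + (1 - y) * -(a * ((A + 1) / (B + 1))))
        = y * b - (A + 1) * (1 - y) * a := by
      field_simp; ring
    rw [← hscale]
    gcongr
    linarith
  have hAc : 0 ≤ A * c := mul_nonneg hA.le hc.1
  unfold binKL at hKL
  linarith
end

section
/- Analytic inequality for z ≤ 1/2: let A > 0, B ≥ A/4 + 1/A, A' = A + 1, B' = B + 1. Then for all y ∈ [0,1] and z ∈ (0, 1/2], one has B'·(y ln(y/z) + (1−y) ln((1−y)/(1−z))) + A'(1−y)·z/(1−z) − y ≥ 0, with the convention 0·ln 0 = 0. -/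
open Finset Filter

/-- Gibbs term inequality: `t - s ≤ t * log (t/s)` for `t ≥ 0`, `s > 0`. -/
lemma gibbs_term {t s : ℝ} (ht : 0 ≤ t) (hs : 0 < s) :
    t - s ≤ t * Real.log (t / s) := by
  rcases eq_or_lt_of_le ht with h | h
  · simp [← h]; linarith
  · have h1 : Real.log (s / t) ≤ s / t - 1 := Real.log_le_sub_one_of_pos (by positivity)
    have h2 : Real.log (s / t) = - Real.log (t / s) := by
      rw [Real.log_div hs.ne' h.ne', Real.log_div h.ne' hs.ne']; ring
    have h3 : t * Real.log (s / t) ≤ t * (s / t - 1) :=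
      mul_le_mul_of_nonneg_left h1 ht
    have h4 : t * (s / t - 1) = s - t := by field_simp
    nlinarith [h3, h4, h2]

/-- Key polynomial estimate: at the extreme point `u₀ = 4A/(A+2)²`,
`exp u₀ + exp (-(A+1)u₀) ≤ 2`. -/
lemma key_poly {A : ℝ} (hA : 0 < A) :
    Real.exp (4 * A / (A + 2) ^ 2) +
      Real.exp (-((A + 1) * (4 * A / (A + 2) ^ 2))) ≤ 2 := by
  have hd : (0:ℝ) < (A + 2) ^ 2 := by positivity
  set u : ℝ := 4 * A / (A + 2) ^ 2 with hu
  have hu0 : 0 ≤ u := by positivity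
  have hu1 : u ≤ 1 / 2 := by
    rw [hu, div_le_iff₀ hd]; nlinarith [sq_nonneg (A - 2)]
  have habs : |u| ≤ 1 := by rw [abs_of_nonneg hu0]; linarith
  have h1 : Real.exp u ≤ 1 + u + u ^ 2 / 2 + u ^ 3 / 6 + 5 * u ^ 4 / 96 := by
    have hb := Real.exp_bound habs (by norm_num : 0 < 4)
    have hs : ∑ i ∈ Finset.range 4, u ^ i / (Nat.factorial i) =
        1 + u + u ^ 2 / 2 + u ^ 3 / 6 := by
      simp [Finset.sum_range_succ, Nat.factorial]
    rw [hs] at hb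
    have hb2 := (abs_le.mp hb).2
    rw [abs_of_nonneg hu0] at hb2
    norm_num [Nat.factorial] at hb2
    linarith
  set v : ℝ := (A + 1) * u with hv
  have hv0 : 0 ≤ v := by positivity
  have h2 : 1 + v + v ^ 2 / 2 + v ^ 3 / 6 ≤ Real.exp v := by
    have hb := Real.sum_le_exp_of_nonneg hv0 4
    have hs : ∑ i ∈ Finset.range 4, v ^ i / (Nat.factorial i) =
        1 + v + v ^ 2 / 2 + v ^ 3 / 6 := by
      simp [Finset.sum_range_succ, Nat.factorial]
    linarith [hs ▸ hb]
  have hS : (0:ℝ) < 1 + v + v ^ 2 / 2 + v ^ 3 / 6 := by positivity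
  have h3 : Real.exp (-v) ≤ 1 / (1 + v + v ^ 2 / 2 + v ^ 3 / 6) := by
    rw [Real.exp_neg, one_div]
    exact inv_anti₀ hS h2
  have hfrac : 1 / (1 + v + v ^ 2 / 2 + v ^ 3 / 6) ≤
      1 - u - u ^ 2 / 2 - u ^ 3 / 6 - 5 * u ^ 4 / 96 := by
    rw [div_le_iff₀ hS, ← sub_nonneg]
    have hexp : (1 - u - u ^ 2 / 2 - u ^ 3 / 6 - 5 * u ^ 4 / 96) *
          (1 + v + v ^ 2 / 2 + v ^ 3 / 6) - 1 =
        (16896 * A ^ 4 + 104448 * A ^ 5 + 296576 * A ^ 6 + 514560 * A ^ 7 +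
          602912 * A ^ 8 + 492800 * A ^ 9 + 279336 * A ^ 10 + 106112 * A ^ 11 +
          25392 * A ^ 12 + 3456 * A ^ 13 + 204 * A ^ 14) / (9 * (A + 2) ^ 14) := by
      rw [hv, hu]
      field_simp
      ring
    rw [hexp]
    positivity
  linarith [h1, h3.trans hfrac]

lemma exp_convex_combo {a b t : ℝ} (ht0 : 0 ≤ t) (ht1 : t ≤ 1) :
    Real.exp (t * a + (1 - t) * b) ≤ t * Real.exp a + (1 - t) * Real.exp b := by
  have h := convexOn_exp.2 (Set.mem_univ a) (Set.mem_univ b) ht0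
    (show (0:ℝ) ≤ 1 - t by linarith) (show t + (1 - t) = 1 by ring)
  simpa [smul_eq_mul] using h

/-- Scalar inequality: `exp x + exp (-(A+1)x) ≤ 2` for `0 < x ≤ 4A/(A+2)²`. -/
lemma scalar_ineq {A x : ℝ} (hA : 0 < A) (hx0 : 0 < x)
    (hkey : Real.exp (4 * A / (A + 2) ^ 2) +
      Real.exp (-((A + 1) * (4 * A / (A + 2) ^ 2))) ≤ 2)
    (hxu : x ≤ 4 * A / (A + 2) ^ 2) :
    Real.exp x + Real.exp (-((A + 1) * x)) ≤ 2 := by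
  set u : ℝ := 4 * A / (A + 2) ^ 2 with hu
  have hu0 : 0 < u := by positivity
  set t : ℝ := x / u with htdef
  have ht0 : 0 ≤ t := by positivity
  have ht1 : t ≤ 1 := (div_le_one hu0).mpr hxu
  have htx : t * u = x := div_mul_cancel₀ x hu0.ne'
  have h1 : Real.exp x ≤ t * Real.exp u + (1 - t) := by
    have := exp_convex_combo (a := u) (b := 0) ht0 ht1
    rw [mul_zero, add_zero, htx, Real.exp_zero, mul_one] at this
    exact this
  have h2 : Real.exp (-((A + 1) * x)) ≤ t * Real.exp (-((A + 1) * u)) + (1 - t) := by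
    have := exp_convex_combo (a := -((A + 1) * u)) (b := 0) ht0 ht1
    rw [mul_zero, add_zero, Real.exp_zero, mul_one] at this
    have harg : t * -((A + 1) * u) = -((A + 1) * x) := by rw [← htx]; ring
    rwa [harg] at this
  have h3 : t * (Real.exp u + Real.exp (-((A + 1) * u))) ≤ t * 2 :=
    mul_le_mul_of_nonneg_left hkey ht0
  nlinarith [h1, h2, h3]

/-- analytic inequality for `z ≤ 1/2`, eq. (14):
with `A' = A+1`, `B' = B+1`, for all `y ∈ [0,1]` and `z ∈ (0,1/2]`,
`B'(y ln(y/z) + (1−y) ln((1−y)/(1−z))) + A'(1−y) z/(1−z) − y ≥ 0`. -/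
theorem analytic_inequality_z_le_half
    (A B : ℝ) (hA : 0 < A) (hB : A / 4 + 1 / A ≤ B)
    (y z : ℝ) (hy : y ∈ Set.Icc (0 : ℝ) 1) (hz : z ∈ Set.Ioc (0 : ℝ) (1 / 2)) :
    0 ≤ (B + 1) * (y * Real.log (y / z) + (1 - y) * Real.log ((1 - y) / (1 - z)))
        + (A + 1) * (1 - y) * (z / (1 - z)) - y := by
  obtain ⟨hy0, hy1⟩ := hy
  obtain ⟨hz0, hz12⟩ := hz
  have hz1 : z < 1 := by linarith
  have h1z : (0:ℝ) < 1 - z := by linarith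
  have hApos : (0:ℝ) < A / 4 + 1 / A := by positivity
  have hB' : (0:ℝ) < B + 1 := by linarith
  set w : ℝ := z / (1 - z) with hwdef
  have hw0 : 0 < w := div_pos hz0 h1z
  have hw1 : w ≤ 1 := by rw [hwdef, div_le_one h1z]; linarith
  set x : ℝ := 1 / (B + 1) with hxdef
  have hx0 : 0 < x := by rw [hxdef]; positivity
  have hxu : x ≤ 4 * A / (A + 2) ^ 2 := by
    have hle : (A + 2) ^ 2 / (4 * A) ≤ B + 1 := by
      have heq : (A + 2) ^ 2 / (4 * A) = A / 4 + 1 / A + 1 := by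
        field_simp; ring
      linarith [heq.le, heq.ge]
    have h2 : 1 / (B + 1) ≤ 1 / ((A + 2) ^ 2 / (4 * A)) :=
      one_div_le_one_div_of_le (by positivity) hle
    rw [one_div_div] at h2
    rw [hxdef]; exact h2
  have hscalar : Real.exp x + Real.exp (-((A + 1) * x)) ≤ 2 :=
    scalar_ineq hA hx0 (key_poly hA) hxu
  -- convexity in w
  have key2 : Real.exp (-((A + 1) * w * x)) ≤ 1 - w * (Real.exp x - 1) := by
    have hcx := convexOn_exp.2 (Set.mem_univ (-((A + 1) * x))) (Set.mem_univ (0:ℝ))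
      hw0.le (show (0:ℝ) ≤ 1 - w by linarith) (show w + (1 - w) = 1 by ring)
    simp only [smul_eq_mul, mul_zero, add_zero, Real.exp_zero, mul_one] at hcx
    have harg : w * -((A + 1) * x) = -((A + 1) * w * x) := by ring
    rw [harg] at hcx
    have h6 : Real.exp (-((A + 1) * x)) ≤ 2 - Real.exp x := by linarith
    have h7 : w * Real.exp (-((A + 1) * x)) ≤ w * (2 - Real.exp x) :=
      mul_le_mul_of_nonneg_left h6 hw0.le
    nlinarith [hcx, h7]
  set m : ℝ := (A + 1) * w * x with hmdef
  set c : ℝ := m + x with hcdef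
  have hcB : (B + 1) * c = (A + 1) * w + 1 := by
    rw [hcdef, hmdef, hxdef]; field_simp
  have hMpos : 0 < z * Real.exp c + (1 - z) := by
    nlinarith [mul_pos hz0 (Real.exp_pos c)]
  set M : ℝ := z * Real.exp c + (1 - z) with hMdef
  have hM0 : 0 < M := hMpos
  have hgz : 0 < 1 - w * (Real.exp x - 1) := lt_of_lt_of_le (Real.exp_pos _) key2
  have hfactor : (1 - z) * (1 - w * (Real.exp x - 1)) = 1 - z * Real.exp x := by
    rw [hwdef]; field_simp; ring
  have h6 : 1 ≤ Real.exp m * (1 - w * (Real.exp x - 1)) := by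
    have h := mul_le_mul_of_nonneg_left key2 (Real.exp_pos m).le
    rwa [← Real.exp_add, add_neg_cancel, Real.exp_zero] at h
  have h7 : 1 - z ≤ Real.exp m * (1 - z * Real.exp x) := by
    calc 1 - z = (1 - z) * 1 := by ring
      _ ≤ (1 - z) * (Real.exp m * (1 - w * (Real.exp x - 1))) :=
          mul_le_mul_of_nonneg_left h6 h1z.le
      _ = Real.exp m * ((1 - z) * (1 - w * (Real.exp x - 1))) := by ring
      _ = Real.exp m * (1 - z * Real.exp x) := by rw [hfactor]
  have hMe : M ≤ Real.exp m := by
    have hec : Real.exp c = Real.exp m * Real.exp x := by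
      rw [hcdef, Real.exp_add]
    rw [hMdef, hec]
    nlinarith [h7]
  have hlogM : Real.log M ≤ m := (Real.log_le_iff_le_exp hM0).mpr hMe
  -- Gibbs step
  set q : ℝ := z * Real.exp c / M with hqdef
  have hq0 : 0 < q := div_pos (mul_pos hz0 (Real.exp_pos c)) hM0
  have hq1 : 1 - q = (1 - z) / M := by
    rw [hqdef]
    field_simp
    rw [hMdef]; ring
  have hq1' : 0 < 1 - q := by rw [hq1]; exact div_pos h1z hM0
  have hlogq : Real.log q = Real.log z + c - Real.log M := by
    rw [hqdef, Real.log_div (by positivity) hM0.ne',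
      Real.log_mul hz0.ne' (Real.exp_pos c).ne', Real.log_exp]
  have gibbs1 : y - q ≤ y * Real.log (y / q) := gibbs_term hy0 hq0
  have gibbs2 : (1 - y) - (1 - q) ≤ (1 - y) * Real.log ((1 - y) / (1 - q)) :=
    gibbs_term (by linarith) hq1'
  have ident1 : y * Real.log (y / q) = y * Real.log (y / z) - c * y + y * Real.log M := by
    rcases eq_or_lt_of_le hy0 with h | h
    · simp [← h]
    · have hl : Real.log (y / q) = Real.log (y / z) - c + Real.log M := by
        rw [Real.log_div h.ne' hq0.ne', Real.log_div h.ne' hz0.ne', hlogq]; ring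
      rw [hl]; ring
  have ident2 : (1 - y) * Real.log ((1 - y) / (1 - q)) =
      (1 - y) * Real.log ((1 - y) / (1 - z)) + (1 - y) * Real.log M := by
    rcases eq_or_lt_of_le hy1 with h | h
    · simp [h]
    · have h1y : 0 < 1 - y := by linarith
      have hl : Real.log ((1 - y) / (1 - q)) =
          Real.log ((1 - y) / (1 - z)) + Real.log M := by
        rw [hq1, Real.log_div h1y.ne' (div_pos h1z hM0).ne',
          Real.log_div h1z.ne' hM0.ne', Real.log_div h1y.ne' h1z.ne']
        ring
      rw [hl]; ring
  have hKL : c * y - Real.log M ≤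
      y * Real.log (y / z) + (1 - y) * Real.log ((1 - y) / (1 - z)) := by
    linarith [gibbs1, gibbs2, ident1, ident2]
  -- final assembly
  have hmul : (B + 1) * (c * y - Real.log M) ≤
      (B + 1) * (y * Real.log (y / z) + (1 - y) * Real.log ((1 - y) / (1 - z))) :=
    mul_le_mul_of_nonneg_left hKL hB'.le
  have hcy : (B + 1) * (c * y) = ((A + 1) * w + 1) * y := by
    rw [← hcB]; ring
  have h8 : (B + 1) * m = (A + 1) * w := by
    rw [hmdef, hxdef]; field_simp
  have hm1 : (B + 1) * Real.log M ≤ (A + 1) * w := by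
    have h9 := mul_le_mul_of_nonneg_left hlogM hB'.le
    linarith
  clear_value w x m c M q
  linarith [hmul, hcy, hm1]
end

section
/- Analytic inequality for z ≥ 1/2: let A > 0, B ≥ A/4 + 1/A, A' = A + 1, B' = B + 1. Then for all y ∈ [0,1] and z ∈ [1/2, 1), one has B'·(y ln(y/z) + (1−y) ln((1−y)/(1−z))) + A'(1−y) − y·(1−z)/z ≥ 0, with the convention 0·ln 0 = 0. -/
open Finset Filter

/-!
Put `u = 1/(B+1)`. For two-point distributions the Donsker–Varadhan inequality says
`y a + (1-y) b ≤ KL(y‖z)` whenever `z eᵃ + (1-z) eᵇ ≤ 1`; with `a = u (1-z)/z` and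
`b = -(A+1) u` this is the claim divided by `B+1`. Since `z ≥ 1/2` gives `(1-z)/z ≤ 1`,
convexity of `exp` reduces the constraint to `eᵘ + e^{-(A+1)u} ≤ 2`. The left side is convex
in `u` and equals `2` at `u = 0`, so it suffices to check it at `u = 4A/(A+2)² ≥ 1/(B+1)`,
where Taylor bounds turn it into a polynomial inequality in `A`.
-/

open Real

noncomputable def binaryKL (y z : ℝ) : ℝ :=
  y * log (y / z) + (1 - y) * log ((1 - y) / (1 - z))

lemma mul_add_sub_mul_exp_le_mul_log_div {p m : ℝ} (a : ℝ) (hp : 0 ≤ p) (hm : 0 < m) :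
    p * a + p - m * exp a ≤ p * log (p / m) := by
  set t := m * exp a
  have ht : 0 < t := by positivity
  have hlog : p * log (p / m) = p * log (p / t) + p * a := by
    rcases hp.eq_or_lt with rfl | hp
    · simp
    · rw [log_div hp.ne' hm.ne', log_div hp.ne' ht.ne', log_mul hm.ne' (exp_pos a).ne',
        log_exp]
      ring
  have htangent : p - t ≤ p * log (p / t) := by
    calc p - t = t * (p / t - 1) := by field_simp
      _ ≤ t * (p / t * log (p / t)) :=
        mul_le_mul_of_nonneg_left (self_sub_one_le_mul_log (by positivity)) ht.le
      _ = p * log (p / t) := by field_simp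
  linarith

lemma le_binaryKL_of_mul_exp_add_mul_exp_le_one {y z : ℝ} (a b : ℝ) (hy : y ∈ Set.Icc 0 1)
    (hz : z ∈ Set.Ioo 0 1) (h : z * exp a + (1 - z) * exp b ≤ 1) :
    y * a + (1 - y) * b ≤ binaryKL y z := by
  have hya := mul_add_sub_mul_exp_le_mul_log_div a hy.1 hz.1
  have hyb := mul_add_sub_mul_exp_le_mul_log_div b (sub_nonneg.2 hy.2) (sub_pos.2 hz.2)
  unfold binaryKL
  linarith

lemma exp_mul_le_one_sub_add_mul_exp {t : ℝ} (x : ℝ) (ht₀ : 0 ≤ t) (ht₁ : t ≤ 1) :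
    exp (t * x) ≤ 1 - t + t * exp x := by
  simpa using convexOn_exp.2 (Set.mem_univ 0) (Set.mem_univ x) (sub_nonneg.2 ht₁) ht₀ (by ring)

lemma exp_add_exp_neg_mul_le_two_of_le {c U u : ℝ} (h : exp U + exp (-(c * U)) ≤ 2)
    (hU : 0 < U) (hu₀ : 0 ≤ u) (hu : u ≤ U) :
    exp u + exp (-(c * u)) ≤ 2 := by
  set t := u / U
  have ht₀ : 0 ≤ t := by positivity
  have ht₁ : t ≤ 1 := (div_le_one hU).2 hu
  have hu_eq : u = t * U := (div_mul_cancel₀ u hU.ne').symm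
  have h₁ := exp_mul_le_one_sub_add_mul_exp U ht₀ ht₁
  have h₂ := exp_mul_le_one_sub_add_mul_exp (-(c * U)) ht₀ ht₁
  rw [← hu_eq] at h₁
  rw [show t * -(c * U) = -(c * u) by rw [hu_eq]; ring] at h₂
  have := mul_le_mul_of_nonneg_left h ht₀
  linarith

lemma exp_add_exp_neg_mul_le_two_at_bound {A : ℝ} (hA : 0 < A) :
    exp (4 * A / (A + 2) ^ 2) + exp (-((A + 1) * (4 * A / (A + 2) ^ 2))) ≤ 2 := by
  set r := 4 * A / (A + 2) ^ 2 with hr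
  set x := (A + 1) * r with hx
  have hr₀ : 0 ≤ r := by positivity
  have hr₁ : r ≤ 1 := by
    rw [hr, div_le_one (by positivity)]
    nlinarith [sq_nonneg (A - 2)]
  set P := 1 + r + r ^ 2 / 2 + r ^ 3 / 6 + 5 / 96 * r ^ 4 with hP
  set S := 1 + x + x ^ 2 / 2 + x ^ 3 / 6 + x ^ 4 / 24 with hS
  -- `5 / 96 = (n + 1) / (n! n)` for `n = 4`, the remainder in `Real.exp_bound'`
  have hexp_r : exp r ≤ P := by
    have := exp_bound' hr₀ hr₁ (n := 4) (by norm_num)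
    norm_num [Finset.sum_range_succ, Nat.factorial] at this
    linarith
  have hexp_x : S ≤ exp x := by
    have := sum_le_exp_of_nonneg (by positivity : 0 ≤ x) 5
    norm_num [Finset.sum_range_succ, Nat.factorial] at this
    linarith
  have hS₀ : 0 < S := by positivity
  -- `eʳ + e⁻ˣ` matches `2` to third order at `A = 0`, hence the factor `A ^ 4`
  have hPS : 1 ≤ (2 - P) * S := by
    have hcert : (2 - P) * S - 1
        = A ^ 4 * (92160 + 657408 * A + 2149376 * A ^ 2 + 4284928 * A ^ 3
            + 5829120 * A ^ 4 + 5724288 * A ^ 5 + 4172480 * A ^ 6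
            + 2274336 * A ^ 7 + 915784 * A ^ 8 + 263104 * A ^ 9
            + 50592 * A ^ 10 + 5808 * A ^ 11 + 300 * A ^ 12)
          / (9 * (A + 2) ^ 16) := by
      rw [hP, hS, hx, hr]
      field_simp
      ring
    have : 0 ≤ (2 - P) * S - 1 := by rw [hcert]; positivity
    linarith
  calc exp r + exp (-x) = exp r + (exp x)⁻¹ := by rw [exp_neg]
    _ ≤ P + S⁻¹ := add_le_add hexp_r (inv_anti₀ hS₀ hexp_x)
    _ ≤ 2 := by
      have : S⁻¹ ≤ 2 - P := by rwa [inv_le_iff_one_le_mul₀ hS₀]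
      linarith

lemma exp_add_exp_neg_succ_mul_le_two {A u : ℝ} (hA : 0 < A) (hu₀ : 0 ≤ u)
    (hu : u ≤ 4 * A / (A + 2) ^ 2) : exp u + exp (-((A + 1) * u)) ≤ 2 :=
  exp_add_exp_neg_mul_le_two_of_le (exp_add_exp_neg_mul_le_two_at_bound hA) (by positivity)
    hu₀ hu

lemma mul_exp_add_mul_exp_le_one {z u b : ℝ} (hz : z ∈ Set.Icc (1 / 2) 1)
    (h : exp u + exp b ≤ 2) : z * exp ((1 - z) / z * u) + (1 - z) * exp b ≤ 1 := by
  obtain ⟨hz₀, hz₁⟩ := hz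
  have hq₀ : 0 ≤ (1 - z) / z := div_nonneg (by linarith) (by linarith)
  have hq₁ : (1 - z) / z ≤ 1 := (div_le_one (by linarith)).2 (by linarith)
  calc z * exp ((1 - z) / z * u) + (1 - z) * exp b
      ≤ z * (1 - (1 - z) / z + (1 - z) / z * exp u) + (1 - z) * exp b := by
        gcongr
        exact exp_mul_le_one_sub_add_mul_exp u hq₀ hq₁
    _ = 2 * z - 1 + (1 - z) * (exp u + exp b) := by
        field_simp
        ring
    _ ≤ 2 * z - 1 + (1 - z) * 2 := by gcongr
    _ = 1 := by ring

lemma inv_add_one_le_four_mul_div_sq {A B : ℝ} (hA : 0 < A) (hB : A / 4 + 1 / A ≤ B) :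
    (B + 1)⁻¹ ≤ 4 * A / (A + 2) ^ 2 := by
  have hAB : A ^ 2 + 4 ≤ 4 * A * B := by
    have := mul_le_mul_of_nonneg_left hB hA.le
    field_simp at this
    linarith
  rw [inv_le_comm₀ (by nlinarith) (by positivity), inv_div, div_le_iff₀ (by positivity)]
  linarith

/-- analytic inequality for `z ≥ 1/2`, eq. (15):
with `A' = A+1`, `B' = B+1`, for all `y ∈ [0,1]` and `z ∈ [1/2,1)`,
`B'(y ln(y/z) + (1−y) ln((1−y)/(1−z))) + A'(1−y) − y (1−z)/z ≥ 0`. -/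
theorem analytic_inequality_z_ge_half
    (A B : ℝ) (hA : 0 < A) (hB : A / 4 + 1 / A ≤ B)
    (y z : ℝ) (hy : y ∈ Set.Icc (0 : ℝ) 1) (hz : z ∈ Set.Ico (1 / 2 : ℝ) 1) :
    0 ≤ (B + 1) * (y * Real.log (y / z) + (1 - y) * Real.log ((1 - y) / (1 - z)))
        + (A + 1) * (1 - y) - y * ((1 - z) / z) := by
  obtain ⟨hz₀, hz₁⟩ := hz
  have hB₁ : 0 < B + 1 := by
    have : 0 < A / 4 + 1 / A := by positivity
    linarith
  have hexp := exp_add_exp_neg_succ_mul_le_two hA (by positivity)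
    (inv_add_one_le_four_mul_div_sq hA hB)
  have hKL := le_binaryKL_of_mul_exp_add_mul_exp_le_one _ _ hy ⟨by linarith, hz₁⟩
    (mul_exp_add_mul_exp_le_one ⟨hz₀, hz₁.le⟩ hexp)
  have hscale : (B + 1) * (y * ((1 - z) / z * (B + 1)⁻¹) + (1 - y) * -((A + 1) * (B + 1)⁻¹))
      = y * ((1 - z) / z) - (A + 1) * (1 - y) := by
    field_simp
    ring
  have := mul_le_mul_of_nonneg_left hKL hB₁.le
  unfold binaryKL at this
  linarith
end
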